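/- arXiv:2107.00990 — 6 statements merged into one kernel-verified Lean document; each statement's English description precedes it below -/
import Mathlib

section
/- Let P be a probability distribution on the finite product type B_L × A × B_R satisfying I(B_L : B_R | A)_P = 0. Let R be a channel from A to a finite type A', and let R(P) denote the distribution on B_L × A' × B_R obtained by applying R to the A-component of P. Then I(B_L : B_R | A')_{R(P)} ≤ I(A : B_L B_R)_P − I(A' : B_L B_R)_{R(P)}, where B_L B_R denotes the joint variable (B_L, B_R). -/
open Finset

/-- A probability distribution on a finite type: nonnegative and sums to 1. -/
def IsDist {X : Type*} [Fintype X] (p : X → ℝ) : Prop :=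
  (∀ x, 0 ≤ p x) ∧ ∑ x, p x = 1

/-- A channel (stochastic map) from `A` to `A'`: each row `R a ·` is a
probability distribution on `A'`. -/
def IsChannel {A A' : Type*} [Fintype A'] (R : A → A' → ℝ) : Prop :=
  (∀ a a', 0 ≤ R a a') ∧ ∀ a, ∑ a', R a a' = 1

/-- Shannon entropy with the natural logarithm.  The convention `0 log 0 = 0`
holds automatically since `Real.log 0 = 0`. -/
noncomputable def H {X : Type*} [Fintype X] (p : X → ℝ) : ℝ :=
  -∑ x, p x * Real.log (p x)

/-- Mutual information `I(X:Y)` of a joint distribution on `X × Y`: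
`H(P_X) + H(P_Y) - H(P)`. -/
noncomputable def MI {X Y : Type*} [Fintype X] [Fintype Y] (p : X × Y → ℝ) : ℝ :=
  H (fun x => ∑ y, p (x, y)) + H (fun y => ∑ x, p (x, y)) - H p

/-- Conditional mutual information `I(X:Z|Y) = I(X:YZ) - I(X:Y)` of a joint
distribution on `X × Y × Z` (conditioning on the *middle* variable). -/
noncomputable def CMI {X Y Z : Type*} [Fintype X] [Fintype Y] [Fintype Z]
    (p : X × Y × Z → ℝ) : ℝ :=
  MI p - MI (fun q : X × Y => ∑ z, p (q.1, q.2, z))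

/-- Apply a channel `R : A → A'` to the first component of a joint
distribution on `A × B`. -/
noncomputable def applyFst {A A' B : Type*} [Fintype A]
    (R : A → A' → ℝ) (p : A × B → ℝ) : A' × B → ℝ :=
  fun q => ∑ a, R a q.1 * p (a, q.2)

/-- Apply a channel `R : A → A'` to the middle component of a joint
distribution on `BL × A × BR`. -/
noncomputable def applyMid {BL A A' BR : Type*} [Fintype A]
    (R : A → A' → ℝ) (p : BL × A × BR → ℝ) : BL × A' × BR → ℝ :=
  fun q => ∑ a, R a q.2.1 * p (q.1, a, q.2.2)

lemma myLmul (x y : ℝ) : (x*y) * Real.log (x*y) = y * (x * Real.log x) + x * (y * Real.log y) := by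
  rcases eq_or_ne x 0 with h | hx; · simp [h]
  rcases eq_or_ne y 0 with h | hy; · simp [h]
  rw [Real.log_mul hx hy]; ring

lemma mul_log_sub_le (p q : ℝ) (hp : 0 ≤ p) (hq : 0 ≤ q) (h : p ≠ 0 → q ≠ 0) :
    p * (Real.log q - Real.log p) ≤ q - p := by
  rcases eq_or_ne p 0 with h0 | h0
  · simp [h0, hq]
  have hppos : 0 < p := lt_of_le_of_ne hp (Ne.symm h0)
  have hqpos : 0 < q := lt_of_le_of_ne hq (Ne.symm (h h0))
  have : Real.log (q / p) ≤ q / p - 1 := Real.log_le_sub_one_of_pos (by positivity)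
  rw [Real.log_div (h h0) h0] at this
  calc p * (Real.log q - Real.log p) ≤ p * (q / p - 1) := by
        exact mul_le_mul_of_nonneg_left this hp
    _ = q - p := by field_simp

lemma ssa {X Y Z : Type*} [Fintype X] [Fintype Y] [Fintype Z] (p : X × Y × Z → ℝ)
    (h0 : ∀ x, 0 ≤ p x) (h1 : ∑ x, p x = 1) :
    H p + H (fun y => ∑ x, ∑ z, p (x, y, z)) ≤
      H (fun q : X × Y => ∑ z, p (q.1, q.2, z)) +
      H (fun q : Y × Z => ∑ x, p (x, q.1, q.2)) := by
  classical
  have h12 : ∀ x y, 0 ≤ ∑ z, p (x,y,z) := fun x y => Finset.sum_nonneg fun z _ => h0 _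
  have h23 : ∀ y z, 0 ≤ ∑ x, p (x,y,z) := fun y z => Finset.sum_nonneg fun x _ => h0 _
  have h2 : ∀ y, 0 ≤ ∑ x, ∑ z, p (x,y,z) := fun y => Finset.sum_nonneg fun x _ => h12 x y
  have hsum1 : ∑ x, ∑ y, ∑ z, p (x, y, z) = 1 := by
    rw [← h1]; simp [Fintype.sum_prod_type]
  have key : ∑ x, ∑ y, ∑ z, (p (x,y,z) *
        (Real.log (∑ z', p (x,y,z')) + Real.log (∑ x', p (x',y,z))
          - Real.log (∑ x', ∑ z', p (x',y,z')) - Real.log (p (x,y,z)))) ≤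
      ∑ x, ∑ y, ∑ z, ((∑ z', p (x,y,z')) * (∑ x', p (x',y,z)) /
          (∑ x', ∑ z', p (x',y,z')) - p (x,y,z)) := by
    refine Finset.sum_le_sum fun x _ => Finset.sum_le_sum fun y _ =>
      Finset.sum_le_sum fun z _ => ?_
    rcases eq_or_ne (p (x,y,z)) 0 with hz | hz
    · rw [hz]; simp only [zero_mul, sub_zero]
      exact div_nonneg (mul_nonneg (h12 x y) (h23 y z)) (h2 y)
    · have hp : 0 < p (x,y,z) := lt_of_le_of_ne (h0 _) (Ne.symm hz)
      have h12p : 0 < ∑ z', p (x,y,z') :=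
        lt_of_lt_of_le hp (Finset.single_le_sum (f := fun z' => p (x,y,z'))
          (fun z' _ => h0 _) (Finset.mem_univ z))
      have h23p : 0 < ∑ x', p (x',y,z) :=
        lt_of_lt_of_le hp (Finset.single_le_sum (f := fun x' => p (x',y,z))
          (fun x' _ => h0 _) (Finset.mem_univ x))
      have h2p : 0 < ∑ x', ∑ z', p (x',y,z') :=
        lt_of_lt_of_le h12p (Finset.single_le_sum (f := fun x' => ∑ z', p (x',y,z'))
          (fun x' _ => h12 x' y) (Finset.mem_univ x))
      have hq : 0 < (∑ z', p (x,y,z')) * (∑ x', p (x',y,z)) / (∑ x', ∑ z', p (x',y,z')) := by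
        positivity
      have hlog : Real.log (∑ z', p (x,y,z')) + Real.log (∑ x', p (x',y,z))
          - Real.log (∑ x', ∑ z', p (x',y,z'))
          = Real.log ((∑ z', p (x,y,z')) * (∑ x', p (x',y,z)) / (∑ x', ∑ z', p (x',y,z'))) := by
        rw [Real.log_div (by positivity) h2p.ne', Real.log_mul h12p.ne' h23p.ne']
      rw [hlog]
      exact mul_log_sub_le _ _ (h0 _) hq.le (fun _ => hq.ne')
  have hqsum : ∑ x, ∑ y, ∑ z, ((∑ z', p (x,y,z')) * (∑ x', p (x',y,z)) /
      (∑ x', ∑ z', p (x',y,z'))) ≤ 1 := by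
    rw [Finset.sum_comm]
    have hy : ∀ y : Y, ∑ x, ∑ z, ((∑ z', p (x,y,z')) * (∑ x', p (x',y,z)) /
        (∑ x', ∑ z', p (x',y,z'))) ≤ ∑ x', ∑ z', p (x',y,z') := by
      intro y
      have e1 : ∀ x : X, ∑ z, ((∑ z', p (x,y,z')) * (∑ x', p (x',y,z)) /
          (∑ x', ∑ z', p (x',y,z')))
          = (∑ z', p (x,y,z')) * (∑ z, ∑ x', p (x',y,z)) / (∑ x', ∑ z', p (x',y,z')) := by
        intro x; rw [← Finset.sum_div, ← Finset.mul_sum]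
      rw [Finset.sum_congr rfl (fun x _ => e1 x), ← Finset.sum_div, ← Finset.sum_mul]
      have e2 : ∑ z, ∑ x', p (x',y,z) = ∑ x', ∑ z', p (x',y,z') := Finset.sum_comm
      rw [e2]
      rcases eq_or_ne (∑ x', ∑ z', p (x',y,z')) 0 with hC | hC
      · rw [hC]; simp
      · rw [mul_div_assoc, div_self hC, mul_one]
    calc ∑ y, ∑ x, ∑ z, ((∑ z', p (x,y,z')) * (∑ x', p (x',y,z)) /
          (∑ x', ∑ z', p (x',y,z'))) ≤ ∑ y, ∑ x', ∑ z', p (x',y,z') :=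
        Finset.sum_le_sum fun y _ => hy y
      _ = 1 := by rw [Finset.sum_comm]; exact hsum1
  -- expand key into entropy identities
  have E12 : ∑ x, ∑ y, ∑ z, p (x,y,z) * Real.log (∑ z', p (x,y,z'))
      = ∑ x, ∑ y, (∑ z, p (x,y,z)) * Real.log (∑ z', p (x,y,z')) := by
    refine Finset.sum_congr rfl fun x _ => Finset.sum_congr rfl fun y _ => ?_
    rw [← Finset.sum_mul]
  have E23 : ∑ x, ∑ y, ∑ z, p (x,y,z) * Real.log (∑ x', p (x',y,z))
      = ∑ y, ∑ z, (∑ x, p (x,y,z)) * Real.log (∑ x', p (x',y,z)) := by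
    rw [Finset.sum_comm]
    refine Finset.sum_congr rfl fun y _ => ?_
    rw [Finset.sum_comm]
    refine Finset.sum_congr rfl fun z _ => ?_
    rw [← Finset.sum_mul]
  have E2 : ∑ x, ∑ y, ∑ z, p (x,y,z) * Real.log (∑ x', ∑ z', p (x',y,z'))
      = ∑ y, (∑ x, ∑ z, p (x,y,z)) * Real.log (∑ x', ∑ z', p (x',y,z')) := by
    rw [Finset.sum_comm]
    refine Finset.sum_congr rfl fun y _ => ?_
    symm
    rw [Finset.sum_mul]
    exact Finset.sum_congr rfl fun x _ => Finset.sum_mul _ _ _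
  have EH : H p = -∑ x, ∑ y, ∑ z, p (x,y,z) * Real.log (p (x,y,z)) := by
    simp [H, Fintype.sum_prod_type]
  have EH12 : H (fun q : X × Y => ∑ z, p (q.1, q.2, z))
      = -∑ x, ∑ y, (∑ z, p (x,y,z)) * Real.log (∑ z', p (x,y,z')) := by
    simp [H, Fintype.sum_prod_type]
  have EH23 : H (fun q : Y × Z => ∑ x, p (x, q.1, q.2))
      = -∑ y, ∑ z, (∑ x, p (x,y,z)) * Real.log (∑ x', p (x',y,z)) := by
    simp [H, Fintype.sum_prod_type]
  have EH2 : H (fun y => ∑ x, ∑ z, p (x, y, z))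
      = -∑ y, (∑ x, ∑ z, p (x,y,z)) * Real.log (∑ x', ∑ z', p (x',y,z')) := by
    simp [H]
  simp only [mul_add, mul_sub, Finset.sum_add_distrib, Finset.sum_sub_distrib] at key
  rw [E12, E23, E2] at key
  linarith [key, hqsum, hsum1, EH, EH12, EH23, EH2]

/-- Entropy splitting for a product of a joint distribution with a channel. -/
lemma esplit {S A A' : Type*} [Fintype S] [Fintype A] [Fintype A']
    (p : S → A → ℝ) (R : A → A' → ℝ) (hR : ∀ a, ∑ a', R a a' = 1) :
    ∑ s, ∑ a, ∑ a', (p s a * R a a') * Real.log (p s a * R a a')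
      = ∑ s, ∑ a, p s a * Real.log (p s a)
        + ∑ a, ∑ a', (∑ s, p s a) * (R a a' * Real.log (R a a')) := by
  have step : ∀ s a, ∑ a', (p s a * R a a') * Real.log (p s a * R a a')
      = p s a * Real.log (p s a) + ∑ a', p s a * (R a a' * Real.log (R a a')) := by
    intro s a
    have : ∀ a', (p s a * R a a') * Real.log (p s a * R a a')
        = R a a' * (p s a * Real.log (p s a)) + p s a * (R a a' * Real.log (R a a')) :=
      fun a' => myLmul _ _
    rw [Finset.sum_congr rfl fun a' _ => this a', Finset.sum_add_distrib,
      ← Finset.sum_mul, hR a, one_mul]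
  calc ∑ s, ∑ a, ∑ a', (p s a * R a a') * Real.log (p s a * R a a')
      = ∑ s, ∑ a, (p s a * Real.log (p s a) + ∑ a', p s a * (R a a' * Real.log (R a a'))) :=
        Finset.sum_congr rfl fun s _ => Finset.sum_congr rfl fun a _ => step s a
    _ = ∑ s, ∑ a, p s a * Real.log (p s a)
        + ∑ s, ∑ a, ∑ a', p s a * (R a a' * Real.log (R a a')) := by
        rw [← Finset.sum_add_distrib]
        exact Finset.sum_congr rfl fun s _ => Finset.sum_add_distrib
    _ = ∑ s, ∑ a, p s a * Real.log (p s a)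
        + ∑ a, ∑ a', (∑ s, p s a) * (R a a' * Real.log (R a a')) := by
        congr 1
        rw [Finset.sum_comm]
        refine Finset.sum_congr rfl fun a _ => ?_
        rw [Finset.sum_comm]
        refine Finset.sum_congr rfl fun a' _ => ?_
        rw [Finset.sum_mul]

lemma H_reindex {X Y : Type*} [Fintype X] [Fintype Y] (e : X ≃ Y) (f : Y → ℝ) :
    H (fun x => f (e x)) = H f := by
  unfold H
  rw [Equiv.sum_comp e (fun y => f y * Real.log (f y))]

lemma CMI_eq {X Y Z : Type*} [Fintype X] [Fintype Y] [Fintype Z] (p : X × Y × Z → ℝ) :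
    CMI p = H (fun q : X × Y => ∑ z, p (q.1, q.2, z))
      + H (fun q : Y × Z => ∑ x, p (x, q.1, q.2))
      - H (fun y => ∑ x, ∑ z, p (x, y, z)) - H p := by
  simp only [CMI, MI, Fintype.sum_prod_type]
  ring_nf


def prodSwap13 {α β γ : Type*} : α × (β × γ) ≃ β × α × γ :=
  ⟨fun q => (q.2.1, q.1, q.2.2), fun q => (q.2.1, (q.1, q.2.2)),
   fun ⟨_, _, _⟩ => rfl, fun ⟨_, _, _⟩ => rfl⟩

def eQ1 {α β γ : Type*} : α × (β × γ) ≃ α × γ × β :=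
  ⟨fun q => (q.1, q.2.2, q.2.1), fun q => (q.1, (q.2.2, q.2.1)),
   fun ⟨_, _, _⟩ => rfl, fun ⟨_, _, _⟩ => rfl⟩

def eQ2 {α β γ : Type*} : α × (β × γ) ≃ β × γ × α :=
  ⟨fun q => (q.2.1, q.2.2, q.1), fun q => (q.2.2, (q.1, q.2.1)),
   fun ⟨_, _, _⟩ => rfl, fun ⟨_, _, _⟩ => rfl⟩

set_option maxHeartbeats 1000000 in
/-- Theorem 1 of the paper: for `P` on `BL × A × BR` with
`I(BL:BR|A)_P = 0` and any channel `R : A → A'`,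
`I(BL:BR|A')_{R(P)} ≤ I(A:BL BR)_P − I(A':BL BR)_{R(P)}`. -/
theorem stmt_0 {BL A BR A' : Type*} [Fintype BL] [Fintype A] [Fintype BR] [Fintype A']
    (P : BL × A × BR → ℝ) (hP : IsDist P)
    (R : A → A' → ℝ) (hR : IsChannel R)
    (hMarkov : CMI P = 0) :
    CMI (applyMid R P) ≤
      MI (fun q : A × (BL × BR) => P (q.2.1, q.1, q.2.2)) -
      MI (fun q : A' × (BL × BR) => applyMid R P (q.2.1, q.1, q.2.2)) := by
  obtain ⟨hP0, hP1⟩ := hP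
  obtain ⟨hR0, hR1⟩ := hR
  classical
  have hP1' : ∑ bl, ∑ a, ∑ br, P (bl, a, br) = 1 := by
    rw [← hP1]; simp [Fintype.sum_prod_type]
  rw [CMI_eq] at hMarkov
  rw [CMI_eq]
  simp only [MI]
  -- abbreviation for the channel-entropy correction term
  set E : ℝ := ∑ a, ∑ a', (∑ bl, ∑ br, P (bl, a, br)) * (R a a' * Real.log (R a a'))
    with hEdef
  -- First SSA instance : X = BL, Y = BR × A', Z = A
  have h01 : ∀ q : BL × (BR × A') × A, 0 ≤ P (q.1, q.2.2, q.2.1.1) * R q.2.2 q.2.1.2 :=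
    fun q => mul_nonneg (hP0 _) (hR0 _ _)
  have h11 : ∑ q : BL × (BR × A') × A, P (q.1, q.2.2, q.2.1.1) * R q.2.2 q.2.1.2 = 1 := by
    simp only [Fintype.sum_prod_type]
    have e1 : ∀ bl br, ∑ a', ∑ a, P (bl, a, br) * R a a' = ∑ a, P (bl, a, br) := by
      intro bl br
      rw [Finset.sum_comm]
      exact Finset.sum_congr rfl fun a _ => by rw [← Finset.mul_sum, hR1, mul_one]
    rw [Finset.sum_congr rfl fun bl _ => Finset.sum_congr rfl fun br _ => e1 bl br]
    rw [← hP1']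
    exact Finset.sum_congr rfl fun bl _ => Finset.sum_comm
  have S1 : H (fun q : BL × (BR × A') × A => P (q.1, q.2.2, q.2.1.1) * R q.2.2 q.2.1.2)
      + H (fun y : BR × A' => ∑ x : BL, ∑ z : A, P (x, z, y.1) * R z y.2)
      ≤ H (fun q : BL × (BR × A') => ∑ z : A, P (q.1, z, q.2.1) * R z q.2.2)
      + H (fun q : (BR × A') × A => ∑ x : BL, P (x, q.2, q.1.1) * R q.2 q.1.2) :=
    ssa (fun q : BL × (BR × A') × A => P (q.1, q.2.2, q.2.1.1) * R q.2.2 q.2.1.2) h01 h11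
  -- identify the four terms of S1
  have HQ1 : H (fun q : BL × (BR × A') × A => P (q.1, q.2.2, q.2.1.1) * R q.2.2 q.2.1.2)
      = H P - E := by
    have key := esplit (fun (s : BL × BR) (a : A) => P (s.1, a, s.2)) R hR1
    simp only [Fintype.sum_prod_type] at key
    simp only [H, Fintype.sum_prod_type, hEdef]
    have sw : ∑ bl, ∑ br, ∑ a', ∑ a,
          (P (bl, a, br) * R a a') * Real.log (P (bl, a, br) * R a a')
        = ∑ bl, ∑ br, ∑ a, ∑ a',
          (P (bl, a, br) * R a a') * Real.log (P (bl, a, br) * R a a') :=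
      Finset.sum_congr rfl fun bl _ => Finset.sum_congr rfl fun br _ => Finset.sum_comm
    rw [sw, key]
    have sw2 : ∑ bl, ∑ a, ∑ br, P (bl, a, br) * Real.log (P (bl, a, br))
        = ∑ bl, ∑ br, ∑ a, P (bl, a, br) * Real.log (P (bl, a, br)) :=
      Finset.sum_congr rfl fun bl _ => Finset.sum_comm
    rw [sw2]; ring
  have M21 : H (fun y : BR × A' => ∑ x : BL, ∑ z : A, P (x, z, y.1) * R z y.2)
      = H (fun q : A' × BR => ∑ x : BL, applyMid R P (x, q.1, q.2)) := by
    have e : (fun y : BR × A' => ∑ x : BL, ∑ z : A, P (x, z, y.1) * R z y.2)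
        = fun y : BR × A' =>
          (fun q : A' × BR => ∑ x : BL, applyMid R P (x, q.1, q.2)) (Equiv.prodComm BR A' y) := by
      funext y
      show _ = ∑ x : BL, ∑ a, R a y.2 * P (x, a, y.1)
      exact Finset.sum_congr rfl fun bl _ => Finset.sum_congr rfl fun a _ => mul_comm _ _
    rw [e]
    exact H_reindex (Equiv.prodComm BR A') (fun q : A' × BR => ∑ x : BL, applyMid R P (x, q.1, q.2))
  have M121 : H (fun q : BL × (BR × A') => ∑ z : A, P (q.1, z, q.2.1) * R z q.2.2)
      = H (applyMid R P) := by
    have e : (fun q : BL × (BR × A') => ∑ z : A, P (q.1, z, q.2.1) * R z q.2.2)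
        = fun q : BL × (BR × A') => applyMid R P (eQ1 q) := by
      funext q
      show _ = ∑ a, R a q.2.2 * P (q.1, a, q.2.1)
      exact Finset.sum_congr rfl fun a _ => mul_comm _ _
    rw [e, H_reindex]
  have M231 : H (fun q : (BR × A') × A => ∑ x : BL, P (x, q.2, q.1.1) * R q.2 q.1.2)
      = H (fun q : A × BR => ∑ x : BL, P (x, q.1, q.2)) - E := by
    have key := esplit (fun (br : BR) (a : A) => ∑ x : BL, P (x, a, br)) R hR1
    simp only [H, Fintype.sum_prod_type, hEdef]
    have fac : ∀ (br : BR) (a' : A') (a : A),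
        (∑ x : BL, P (x, a, br) * R a a') * Real.log (∑ x : BL, P (x, a, br) * R a a')
        = ((∑ x : BL, P (x, a, br)) * R a a')
            * Real.log ((∑ x : BL, P (x, a, br)) * R a a') := by
      intro br a' a
      rw [show (∑ x : BL, P (x, a, br) * R a a') = (∑ x : BL, P (x, a, br)) * R a a' from by
        rw [Finset.sum_mul]]
    rw [Finset.sum_congr rfl fun br _ => Finset.sum_congr rfl fun a' _ =>
      Finset.sum_congr rfl fun a _ => fac br a' a]
    have sw : ∑ br, ∑ a', ∑ a,
          ((∑ x : BL, P (x, a, br)) * R a a') * Real.log ((∑ x : BL, P (x, a, br)) * R a a')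
        = ∑ br, ∑ a, ∑ a',
          ((∑ x : BL, P (x, a, br)) * R a a') * Real.log ((∑ x : BL, P (x, a, br)) * R a a') :=
      Finset.sum_congr rfl fun br _ => Finset.sum_comm
    rw [sw, key]
    have sw2 : ∑ a, ∑ br, (∑ x : BL, P (x, a, br)) * Real.log (∑ x : BL, P (x, a, br))
        = ∑ br, ∑ a, (∑ x : BL, P (x, a, br)) * Real.log (∑ x : BL, P (x, a, br)) :=
      Finset.sum_comm
    have sw3 : ∑ a, ∑ a', (∑ bl, ∑ br, P (bl, a, br)) * (R a a' * Real.log (R a a'))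
        = ∑ a, ∑ a', (∑ br, ∑ x : BL, P (x, a, br)) * (R a a' * Real.log (R a a')) :=
      Finset.sum_congr rfl fun a _ => Finset.sum_congr rfl fun a' _ => by
        rw [show (∑ bl, ∑ br, P (bl, a, br)) = ∑ br, ∑ x : BL, P (x, a, br) from
          Finset.sum_comm]
    rw [sw2, sw3]; ring
  rw [HQ1, M21, M121, M231] at S1
  -- Second SSA instance : X = BR, Y = BL × A', Z = A
  have h02 : ∀ q : BR × (BL × A') × A, 0 ≤ P (q.2.1.1, q.2.2, q.1) * R q.2.2 q.2.1.2 :=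
    fun q => mul_nonneg (hP0 _) (hR0 _ _)
  have h12 : ∑ q : BR × (BL × A') × A, P (q.2.1.1, q.2.2, q.1) * R q.2.2 q.2.1.2 = 1 := by
    simp only [Fintype.sum_prod_type]
    have e1 : ∀ br bl, ∑ a', ∑ a, P (bl, a, br) * R a a' = ∑ a, P (bl, a, br) := by
      intro br bl
      rw [Finset.sum_comm]
      exact Finset.sum_congr rfl fun a _ => by rw [← Finset.mul_sum, hR1, mul_one]
    rw [Finset.sum_congr rfl fun br _ => Finset.sum_congr rfl fun bl _ => e1 br bl]
    rw [Finset.sum_comm, ← hP1']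
    exact Finset.sum_congr rfl fun bl _ => Finset.sum_comm
  have S2 : H (fun q : BR × (BL × A') × A => P (q.2.1.1, q.2.2, q.1) * R q.2.2 q.2.1.2)
      + H (fun y : BL × A' => ∑ x : BR, ∑ z : A, P (y.1, z, x) * R z y.2)
      ≤ H (fun q : BR × (BL × A') => ∑ z : A, P (q.2.1, z, q.1) * R z q.2.2)
      + H (fun q : (BL × A') × A => ∑ x : BR, P (q.1.1, q.2, x) * R q.2 q.1.2) :=
    ssa (fun q : BR × (BL × A') × A => P (q.2.1.1, q.2.2, q.1) * R q.2.2 q.2.1.2) h02 h12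
  have HQ2 : H (fun q : BR × (BL × A') × A => P (q.2.1.1, q.2.2, q.1) * R q.2.2 q.2.1.2)
      = H P - E := by
    have key := esplit (fun (s : BR × BL) (a : A) => P (s.2, a, s.1)) R hR1
    simp only [Fintype.sum_prod_type] at key
    simp only [H, Fintype.sum_prod_type, hEdef]
    have sw : ∑ br, ∑ bl, ∑ a', ∑ a,
          (P (bl, a, br) * R a a') * Real.log (P (bl, a, br) * R a a')
        = ∑ br, ∑ bl, ∑ a, ∑ a',
          (P (bl, a, br) * R a a') * Real.log (P (bl, a, br) * R a a') :=
      Finset.sum_congr rfl fun br _ => Finset.sum_congr rfl fun bl _ => Finset.sum_comm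
    rw [sw, key]
    have sw2 : ∑ bl, ∑ a, ∑ br, P (bl, a, br) * Real.log (P (bl, a, br))
        = ∑ br, ∑ bl, ∑ a, P (bl, a, br) * Real.log (P (bl, a, br)) := by
      rw [show (∑ bl, ∑ a, ∑ br, P (bl, a, br) * Real.log (P (bl, a, br)))
          = ∑ bl, ∑ br, ∑ a, P (bl, a, br) * Real.log (P (bl, a, br)) from
        Finset.sum_congr rfl fun _ _ => Finset.sum_comm]
      exact Finset.sum_comm
    have sw3 : ∑ a, ∑ a', (∑ bl, ∑ br, P (bl, a, br)) * (R a a' * Real.log (R a a'))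
        = ∑ a, ∑ a', (∑ br, ∑ bl, P (bl, a, br)) * (R a a' * Real.log (R a a')) :=
      Finset.sum_congr rfl fun a _ => Finset.sum_congr rfl fun a' _ => by
        rw [show (∑ bl, ∑ br, P (bl, a, br)) = ∑ br, ∑ bl, P (bl, a, br) from
          Finset.sum_comm]
    rw [sw2, sw3]; ring
  have M22 : H (fun y : BL × A' => ∑ x : BR, ∑ z : A, P (y.1, z, x) * R z y.2)
      = H (fun q : BL × A' => ∑ z : BR, applyMid R P (q.1, q.2, z)) := by
    have e : (fun y : BL × A' => ∑ x : BR, ∑ z : A, P (y.1, z, x) * R z y.2)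
        = fun q : BL × A' => ∑ z : BR, applyMid R P (q.1, q.2, z) := by
      funext y
      show _ = ∑ br, ∑ a, R a y.2 * P (y.1, a, br)
      exact Finset.sum_congr rfl fun br _ => Finset.sum_congr rfl fun a _ => mul_comm _ _
    rw [e]
  have M122 : H (fun q : BR × (BL × A') => ∑ z : A, P (q.2.1, z, q.1) * R z q.2.2)
      = H (applyMid R P) := by
    have e : (fun q : BR × (BL × A') => ∑ z : A, P (q.2.1, z, q.1) * R z q.2.2)
        = fun q : BR × (BL × A') => applyMid R P (eQ2 q) := by
      funext q
      show _ = ∑ a, R a q.2.2 * P (q.2.1, a, q.1)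
      exact Finset.sum_congr rfl fun a _ => mul_comm _ _
    rw [e, H_reindex]
  have M232 : H (fun q : (BL × A') × A => ∑ x : BR, P (q.1.1, q.2, x) * R q.2 q.1.2)
      = H (fun q : BL × A => ∑ z : BR, P (q.1, q.2, z)) - E := by
    have key := esplit (fun (bl : BL) (a : A) => ∑ z : BR, P (bl, a, z)) R hR1
    simp only [H, Fintype.sum_prod_type, hEdef]
    have fac : ∀ (bl : BL) (a' : A') (a : A),
        (∑ x : BR, P (bl, a, x) * R a a') * Real.log (∑ x : BR, P (bl, a, x) * R a a')
        = ((∑ z : BR, P (bl, a, z)) * R a a')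
            * Real.log ((∑ z : BR, P (bl, a, z)) * R a a') := by
      intro bl a' a
      rw [show (∑ x : BR, P (bl, a, x) * R a a') = (∑ z : BR, P (bl, a, z)) * R a a' from by
        rw [Finset.sum_mul]]
    rw [Finset.sum_congr rfl fun bl _ => Finset.sum_congr rfl fun a' _ =>
      Finset.sum_congr rfl fun a _ => fac bl a' a]
    have sw : ∑ bl, ∑ a', ∑ a,
          ((∑ z : BR, P (bl, a, z)) * R a a') * Real.log ((∑ z : BR, P (bl, a, z)) * R a a')
        = ∑ bl, ∑ a, ∑ a',
          ((∑ z : BR, P (bl, a, z)) * R a a') * Real.log ((∑ z : BR, P (bl, a, z)) * R a a') :=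
      Finset.sum_congr rfl fun bl _ => Finset.sum_comm
    rw [sw, key]
    ring
  rw [HQ2, M22, M122, M232] at S2
  -- identify the terms of the goal
  have G1 : (fun x : A => ∑ y : BL × BR, P (y.1, x, y.2))
      = fun y : A => ∑ x : BL, ∑ z : BR, P (x, y, z) := by
    funext a; exact Fintype.sum_prod_type ..
  have G2 : H (fun q : A × (BL × BR) => P (q.2.1, q.1, q.2.2)) = H P :=
    H_reindex prodSwap13 P
  have G3 : (fun x : A' => ∑ y : BL × BR, applyMid R P (y.1, x, y.2))
      = fun y : A' => ∑ x : BL, ∑ z : BR, applyMid R P (x, y, z) := by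
    funext a; exact Fintype.sum_prod_type ..
  have G4 : H (fun q : A' × (BL × BR) => applyMid R P (q.2.1, q.1, q.2.2))
      = H (applyMid R P) := H_reindex prodSwap13 (applyMid R P)
  have G5 : (fun y : BL × BR => ∑ x : A', applyMid R P (y.1, x, y.2))
      = fun y : BL × BR => ∑ x : A, P (y.1, x, y.2) := by
    funext y
    show (∑ a', ∑ a, R a a' * P (y.1, a, y.2)) = _
    rw [Finset.sum_comm]
    exact Finset.sum_congr rfl fun a _ => by rw [← Finset.sum_mul, hR1, one_mul]
  rw [G1, G2, G3, G4, G5]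
  linarith [hMarkov, S1, S2]
end

section
/- Let P be a probability distribution on the finite product type B_L × A × B_R satisfying I(B_L : B_R | A)_P = 0. Let R be a channel from A to a finite type A', and let R(P) denote the distribution on B_L × A' × B_R obtained by applying R to the A-component of P. If I(A' : B_L B_R)_{R(P)} = I(A : B_L B_R)_P, then I(B_L : B_R | A')_{R(P)} = 0. -/
open Finset

/-! Let `Q` be the joint law of `(B_L, A, B_R, A')`, where `A'` is produced from `A` by `R`. Since
`A'` depends on `(B_L, B_R)` only through `A`, adding `A'` to any family of variables containing `A`
raises the entropy by the same amount, the average entropy of the rows of `R`. Strong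
subadditivity for `I(B_L : A | A' B_R)` and for `I(A : B_R | B_L A')`, rewritten with this
observation, gives
`I(B_L : B_R | A') ≤ I(B_L : B_R | A) + I(A : B_L B_R) - I(A' : B_L B_R)`,
and the right-hand side vanishes under the hypotheses. Strong subadditivity itself is Gibbs'
inequality comparing `p` with the Markov chain `p_XY p_YZ / p_Y`. -/

open Real

lemma mul_log_le_mul_log_add_sub {p q : ℝ} (hp : 0 ≤ p) (hq : 0 ≤ q) (hqp : q = 0 → p = 0) :
    p * log q ≤ p * log p + (q - p) := by
  rcases hp.eq_or_lt with rfl | hp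
  · simpa using hq
  have hq : 0 < q := hq.lt_of_ne fun h => hp.ne' (hqp h.symm)
  have := mul_le_mul_of_nonneg_left (log_le_sub_one_of_pos (div_pos hq hp)) hp.le
  rw [log_div hq.ne' hp.ne', mul_sub, mul_sub, mul_div_cancel₀ _ hp.ne'] at this
  linarith

lemma sum_mul_log_le_sum_mul_log {ι : Type*} [Fintype ι] {p q : ι → ℝ} (hp : ∀ i, 0 ≤ p i)
    (hq : ∀ i, 0 ≤ q i) (hqp : ∀ i, q i = 0 → p i = 0) (hsum : ∑ i, q i ≤ ∑ i, p i) :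
    ∑ i, p i * log (q i) ≤ ∑ i, p i * log (p i) := by
  have := Finset.sum_le_sum fun i (_ : i ∈ Finset.univ) =>
    mul_log_le_mul_log_add_sub (hp i) (hq i) (hqp i)
  rw [Finset.sum_add_distrib, Finset.sum_sub_distrib] at this
  linarith

open Classical in
noncomputable def marginal {Ω Y : Type*} [Fintype Ω] (Q : Ω → ℝ) (f : Ω → Y) : Y → ℝ :=
  fun y => ∑ ω with f ω = y, Q ω

section Marginal

variable {Ω Y Z : Type*} [Fintype Ω] (Q : Ω → ℝ)

lemma marginal_apply [DecidableEq Y] (f : Ω → Y) (y : Y) :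
    marginal Q f y = ∑ ω, if f ω = y then Q ω else 0 := by
  rw [marginal, Finset.sum_filter]
  congr!

lemma marginal_id : marginal Q id = Q := by
  classical
  funext ω
  simp [marginal_apply]

lemma marginal_eq_comp_of_inverse {σ : Y → Ω} {τ : Ω → Y} (hστ : ∀ ω, σ (τ ω) = ω)
    (hτσ : ∀ y, τ (σ y) = y) : marginal Q τ = fun y => Q (σ y) := by
  classical
  funext y
  have hfib : ∀ ω, τ ω = y ↔ ω = σ y := fun ω =>
    ⟨fun h => h ▸ (hστ ω).symm, fun h => h ▸ hτσ y⟩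
  simp [marginal_apply, hfib]

lemma sum_marginal_mul [Fintype Y] (f : Ω → Y) (g : Y → ℝ) :
    ∑ y, marginal Q f y * g y = ∑ ω, Q ω * g (f ω) := by
  classical
  simp only [marginal_apply, Finset.sum_mul, ite_mul, zero_mul]
  rw [Finset.sum_comm]
  simp

lemma sum_marginal [Fintype Y] (f : Ω → Y) : ∑ y, marginal Q f y = ∑ ω, Q ω := by
  simpa using sum_marginal_mul Q f 1

lemma marginal_marginal [Fintype Y] (f : Ω → Y) (g : Y → Z) :
    marginal (marginal Q f) g = marginal Q fun ω => g (f ω) := by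
  classical
  funext z
  have := sum_marginal_mul Q f fun y => if g y = z then 1 else 0
  simp only [mul_ite, mul_one, mul_zero] at this
  rw [marginal_apply, marginal_apply, ← this]

lemma H_marginal_eq [Fintype Y] (f : Ω → Y) :
    H (marginal Q f) = -∑ ω, Q ω * log (marginal Q f (f ω)) := by
  rw [H, sum_marginal_mul Q f fun y => log (marginal Q f y)]

lemma H_marginal_congr [Fintype Y] [Fintype Z] {f : Ω → Y} {g : Ω → Z}
    (h : ∀ ω ω', f ω' = f ω ↔ g ω' = g ω) : H (marginal Q f) = H (marginal Q g) := by
  classical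
  simp only [H_marginal_eq, marginal_apply, h]

variable {Q}

lemma marginal_nonneg (hQ : ∀ ω, 0 ≤ Q ω) (f : Ω → Y) (y : Y) : 0 ≤ marginal Q f y :=
  Finset.sum_nonneg fun ω _ => hQ ω

lemma le_marginal (hQ : ∀ ω, 0 ≤ Q ω) (f : Ω → Y) (ω : Ω) : Q ω ≤ marginal Q f (f ω) :=
  Finset.single_le_sum (fun ω _ => hQ ω) (by simp)

end Marginal

section Entropy

variable {X Y Z : Type*} [Fintype X] [Fintype Y] [Fintype Z]

lemma marginal_fst_apply (p : X × Y → ℝ) (x : X) : marginal p Prod.fst x = ∑ y, p (x, y) := by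
  classical
  rw [marginal_apply, Fintype.sum_prod_type,
    Finset.sum_eq_single x (fun x' _ hx' => by simp [hx']) (by simp)]
  simp

lemma marginal_snd_apply (p : X × Y → ℝ) (y : Y) : marginal p Prod.snd y = ∑ x, p (x, y) := by
  classical
  simp [marginal_apply, Fintype.sum_prod_type]

lemma MI_eq_H_marginal (p : X × Y → ℝ) :
    MI p = H (marginal p Prod.fst) + H (marginal p Prod.snd) - H p := by
  simp only [MI, ← marginal_fst_apply, ← marginal_snd_apply]

lemma CMI_eq_H_marginal (p : X × Y × Z → ℝ) :
    CMI p = H (marginal p fun ω => (ω.1, ω.2.1)) + H (marginal p Prod.snd)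
      - H (marginal p fun ω => ω.2.1) - H p := by
  have hXY : (fun q : X × Y => ∑ z, p (q.1, q.2, z)) = marginal p fun ω => (ω.1, ω.2.1) := by
    classical
    funext q
    simp [marginal_apply, Fintype.sum_prod_type, Prod.ext_iff, ite_and, Finset.sum_comm (γ := Y)]
  rw [CMI, hXY, MI_eq_H_marginal, MI_eq_H_marginal, marginal_marginal, marginal_marginal]
  ring

lemma CMI_nonneg {p : X × Y × Z → ℝ} (hp : ∀ ω, 0 ≤ p ω) : 0 ≤ CMI p := by
  set a := marginal p fun ω => (ω.1, ω.2.1)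
  set b := marginal p Prod.snd
  set c := marginal p fun ω => ω.2.1
  have hac : ∀ y, ∑ x, a (x, y) = c y := fun y => by
    rw [← marginal_snd_apply, marginal_marginal]
  have hpos : ∀ ω, 0 < p ω → 0 < a (ω.1, ω.2.1) ∧ 0 < b ω.2 ∧ 0 < c ω.2.1 := fun ω h =>
    ⟨h.trans_le (le_marginal hp _ ω), h.trans_le (le_marginal hp _ ω),
      h.trans_le (le_marginal hp _ ω)⟩
  set q : X × Y × Z → ℝ := fun ω => a (ω.1, ω.2.1) * b ω.2 / c ω.2.1
  have hq : ∀ ω, 0 ≤ q ω := fun ω =>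
    div_nonneg (mul_nonneg (marginal_nonneg hp _ _) (marginal_nonneg hp _ _))
      (marginal_nonneg hp _ _)
  have hqp : ∀ ω, q ω = 0 → p ω = 0 := fun ω hq0 => by
    by_contra hp0
    obtain ⟨ha, hb, hc⟩ := hpos ω ((hp ω).lt_of_ne (Ne.symm hp0))
    exact (div_pos (mul_pos ha hb) hc).ne' hq0
  have hsum : ∑ ω, q ω ≤ ∑ ω, p ω := calc
    ∑ ω, q ω = ∑ yz : Y × Z, b yz * (∑ x, a (x, yz.1)) / c yz.1 := by
      rw [Fintype.sum_prod_type, Finset.sum_comm]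
      refine Finset.sum_congr rfl fun yz _ => ?_
      rw [Finset.mul_sum, Finset.sum_div]
      exact Finset.sum_congr rfl fun x _ => by ring
    _ = ∑ yz : Y × Z, b yz * (c yz.1 / c yz.1) := by simp only [hac, mul_div_assoc]
    _ ≤ ∑ yz, b yz := Finset.sum_le_sum fun yz _ =>
      mul_le_of_le_one_right (marginal_nonneg hp _ _) (div_self_le_one _)
    _ = ∑ ω, p ω := sum_marginal p _
  have hlog : ∑ ω, p ω * log (q ω) = -H a - H b + H c := by
    have hpt : ∀ ω, p ω * log (q ω) = p ω * log (a (ω.1, ω.2.1)) + p ω * log (b ω.2)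
        - p ω * log (c ω.2.1) := fun ω => by
      rcases (hp ω).eq_or_lt with h | h
      · simp [← h]
      obtain ⟨ha, hb, hc⟩ := hpos ω h
      rw [log_div (mul_pos ha hb).ne' hc.ne', log_mul ha.ne' hb.ne']
      ring
    rw [Finset.sum_congr rfl fun ω _ => hpt ω, Finset.sum_sub_distrib, Finset.sum_add_distrib,
      H_marginal_eq, H_marginal_eq, H_marginal_eq]
    ring
  have hgibbs := sum_mul_log_le_sum_mul_log hp hq hqp hsum
  rw [CMI_eq_H_marginal]
  linarith [show H p = -∑ ω, p ω * log (p ω) from rfl]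

end Entropy

lemma strong_subadditivity {Ω X Y Z : Type*} [Fintype Ω] [Fintype X] [Fintype Y] [Fintype Z]
    {Q : Ω → ℝ} (hQ : ∀ ω, 0 ≤ Q ω) (fX : Ω → X) (fY : Ω → Y) (fZ : Ω → Z) :
    H (marginal Q fY) + H (marginal Q fun ω => (fX ω, fY ω, fZ ω))
      ≤ H (marginal Q fun ω => (fX ω, fY ω)) + H (marginal Q fun ω => (fY ω, fZ ω)) := by
  have := CMI_nonneg (marginal_nonneg hQ fun ω => (fX ω, fY ω, fZ ω))
  rw [CMI_eq_H_marginal, marginal_marginal, marginal_marginal, marginal_marginal] at this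
  linarith

noncomputable def jointWithChannel {X A A' : Type*} (μ : X → A) (R : A → A' → ℝ) (P : X → ℝ) :
    X × A' → ℝ :=
  fun ω => R (μ ω.1) ω.2 * P ω.1

section Channel

variable {X Y A A' : Type*} [Fintype X] [Fintype A'] {μ : X → A} {R : A → A' → ℝ} {P : X → ℝ}

lemma marginal_jointWithChannel_comp_fst (hR : IsChannel R) (g : X → Y) :
    marginal (jointWithChannel μ R P) (fun ω => g ω.1) = marginal P g := by
  have hfst : marginal (jointWithChannel μ R P) Prod.fst = P := by
    funext x
    rw [marginal_fst_apply]
    simp only [jointWithChannel, ← Finset.sum_mul, hR.2, one_mul]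
  rw [← marginal_marginal, hfst]

lemma marginal_jointWithChannel_apply {g : X → Y} {a : Y → A} (hμ : ∀ x, μ x = a (g x))
    (x : X) (n : A') :
    marginal (jointWithChannel μ R P) (fun ω => (g ω.1, ω.2)) (g x, n)
      = R (μ x) n * marginal P g (g x) := by
  classical
  rw [marginal_apply, marginal_apply, Finset.mul_sum, Fintype.sum_prod_type]
  refine Finset.sum_congr rfl fun x' _ => ?_
  by_cases h : g x' = g x
  · simp [h, hμ x, hμ x', jointWithChannel]
  · simp [h]

lemma H_marginal_jointWithChannel [Fintype Y] {Z : Type*} [Fintype Z] (hR : IsChannel R)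
    (hP : ∀ x, 0 ≤ P x) {g : X → Y} {a : Y → A} (hμ : ∀ x, μ x = a (g x)) {f : X × A' → Z}
    (hf : ∀ ω ω', f ω' = f ω ↔ g ω'.1 = g ω.1 ∧ ω'.2 = ω.2) :
    H (marginal (jointWithChannel μ R P) f) = H (marginal P g) + ∑ x, P x * H (R (μ x)) := by
  have hpt : ∀ x n, R (μ x) n * P x * log (R (μ x) n * marginal P g (g x))
      = P x * (R (μ x) n * log (R (μ x) n)) + R (μ x) n * (P x * log (marginal P g (g x))) := by
    intro x n
    rcases (hR.1 (μ x) n).eq_or_lt with hR0 | hR0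
    · simp [← hR0]
    rcases (hP x).eq_or_lt with hP0 | hP0
    · simp [← hP0]
    rw [log_mul hR0.ne' (hP0.trans_le (le_marginal hP g x)).ne']
    ring
  rw [H_marginal_congr _ (g := fun ω => (g ω.1, ω.2)) fun ω ω' => by rw [hf, Prod.ext_iff],
    H_marginal_eq, H_marginal_eq, Fintype.sum_prod_type]
  simp only [marginal_jointWithChannel_apply hμ, jointWithChannel, hpt]
  simp only [Finset.sum_add_distrib, ← Finset.mul_sum, ← Finset.sum_mul, hR.2, one_mul, H, mul_neg,
    Finset.sum_neg_distrib]
  ring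

end Channel

lemma applyMid_eq_marginal {BL A BR A' : Type*} [Fintype BL] [Fintype A] [Fintype BR]
    [Fintype A'] (R : A → A' → ℝ) (P : BL × A × BR → ℝ) :
    applyMid R P
      = marginal (jointWithChannel (fun x => x.2.1) R P) fun ω => (ω.1.1, ω.2, ω.1.2.2) := by
  classical
  funext q
  simp [jointWithChannel, marginal_apply, applyMid, Fintype.sum_prod_type, Prod.ext_iff, ite_and]

theorem CMI_applyMid_le {BL A BR A' : Type*} [Fintype BL] [Fintype A] [Fintype BR] [Fintype A']
    {P : BL × A × BR → ℝ} (hP : ∀ x, 0 ≤ P x) {R : A → A' → ℝ} (hR : IsChannel R) :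
    CMI (applyMid R P) ≤ CMI P + (MI (fun q : A × (BL × BR) => P (q.2.1, q.1, q.2.2))
      - MI (fun q : A' × (BL × BR) => applyMid R P (q.2.1, q.1, q.2.2))) := by
  rw [← marginal_eq_comp_of_inverse P (τ := fun x => (x.2.1, x.1, x.2.2)) (fun _ => rfl)
      (fun _ => rfl),
    ← marginal_eq_comp_of_inverse (applyMid R P) (τ := fun x => (x.2.1, x.1, x.2.2))
      (fun _ => rfl) (fun _ => rfl),
    applyMid_eq_marginal, CMI_eq_H_marginal, CMI_eq_H_marginal, MI_eq_H_marginal,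
    MI_eq_H_marginal]
  simp only [marginal_marginal]
  rw [marginal_jointWithChannel_comp_fst hR fun x : BL × A × BR => (x.1, x.2.2)]
  set J := jointWithChannel (fun x : BL × A × BR => x.2.1) R P
  have hJ : ∀ ω, 0 ≤ J ω := fun ω => mul_nonneg (hR.1 _ _) (hP _)
  -- `ω = ((b_L, a, b_R), a')`: these are `I(B_L : A | A' B_R) ≥ 0` and `I(A : B_R | B_L A') ≥ 0`
  have hSSA₁ := strong_subadditivity hJ (fun ω => ω.1.1) (fun ω => (ω.2, ω.1.2.2))
    (fun ω => ω.1.2.1)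
  have hSSA₂ := strong_subadditivity hJ (fun ω => ω.1.2.1) (fun ω => (ω.1.1, ω.2))
    (fun ω => ω.1.2.2)
  have hNTA := H_marginal_jointWithChannel (μ := fun x => x.2.1) hR hP (g := Prod.snd)
    (a := Prod.fst) (fun _ => rfl) (f := fun ω : _ × A' => ((ω.2, ω.1.2.2), ω.1.2.1))
    (by intro ω ω'; simp only [Prod.ext_iff]; tauto)
  have hALN := H_marginal_jointWithChannel (μ := fun x => x.2.1) hR hP (g := fun x => (x.1, x.2.1))
    (a := Prod.snd) (fun _ => rfl) (f := fun ω : _ × A' => (ω.1.2.1, ω.1.1, ω.2))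
    (by intro ω ω'; simp only [Prod.ext_iff]; tauto)
  have hLNTA := H_marginal_jointWithChannel (μ := fun x => x.2.1) hR hP (g := id)
    (a := fun x => x.2.1) (fun _ => rfl) (f := fun ω : _ × A' => (ω.1.1, (ω.2, ω.1.2.2), ω.1.2.1))
    (by intro ω ω'; simp only [Prod.ext_iff, id]; tauto)
  have hALNT := H_marginal_jointWithChannel (μ := fun x => x.2.1) hR hP (g := id)
    (a := fun x => x.2.1) (fun _ => rfl) (f := fun ω : _ × A' => (ω.1.2.1, (ω.1.1, ω.2), ω.1.2.2))
    (by intro ω ω'; simp only [Prod.ext_iff, id]; tauto)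
  have hLN_T := H_marginal_congr J (f := fun ω => ((ω.1.1, ω.2), ω.1.2.2))
    (g := fun ω => (ω.1.1, ω.2, ω.1.2.2)) (by intro ω ω'; simp only [Prod.ext_iff]; tauto)
  have hN_LT := H_marginal_congr J (f := fun ω => (ω.2, ω.1.1, ω.1.2.2))
    (g := fun ω => (ω.1.1, ω.2, ω.1.2.2)) (by intro ω ω'; simp only [Prod.ext_iff]; tauto)
  have hA_LT := H_marginal_congr P (f := fun x => (x.2.1, x.1, x.2.2)) (g := id)
    (by intro ω ω'; simp only [Prod.ext_iff, id]; tauto)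
  rw [marginal_id] at hLNTA hALNT hA_LT
  linarith

/-- if moreover `I(A':BL BR)_{R(P)} = I(A:BL BR)_P`, then
`I(BL:BR|A')_{R(P)} = 0`. -/
theorem stmt_1 {BL A BR A' : Type*} [Fintype BL] [Fintype A] [Fintype BR] [Fintype A']
    (P : BL × A × BR → ℝ) (hP : IsDist P)
    (R : A → A' → ℝ) (hR : IsChannel R)
    (hMarkov : CMI P = 0)
    (hpres : MI (fun q : A' × (BL × BR) => applyMid R P (q.2.1, q.1, q.2.2)) =
             MI (fun q : A × (BL × BR) => P (q.2.1, q.1, q.2.2))) :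
    CMI (applyMid R P) = 0 := by
  have hRP : ∀ q, 0 ≤ applyMid R P q := fun q =>
    Finset.sum_nonneg fun a _ => mul_nonneg (hR.1 _ _) (hP.1 _)
  have hle := CMI_applyMid_le hP.1 hR
  rw [hMarkov, hpres, sub_self, add_zero] at hle
  exact le_antisymm hle (CMI_nonneg hRP)
end

section
/- Fix finite types A, A', B and a probability distribution P on A × B. The map from channels to reals, W ↦ I(A':B)_{W(P)}, is convex on the convex set of channels from A to A': for any finite family of channels W_1, ..., W_n from A to A' and any weights q_1, ..., q_n ≥ 0 with ∑ q_i = 1, one has I(A':B)_{(∑_i q_i W_i)(P)} ≤ ∑_i q_i · I(A':B)_{W_i(P)}, where (∑_i q_i W_i)(a'|a) = ∑_i q_i W_i(a'|a). -/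
open Finset

lemma pointwise_gibbs (r g : ℝ) (hr : 0 ≤ r) (hg : 0 ≤ g) (h : 0 < r → 0 < g) :
    r - g ≤ r * Real.log r - r * Real.log g := by
  rcases eq_or_lt_of_le hr with h0 | h0
  · simp [← h0]; linarith
  · have hg' := h h0
    have h1 := Real.log_le_sub_one_of_pos (div_pos hg' h0)
    rw [Real.log_div (ne_of_gt hg') (ne_of_gt h0)] at h1
    have h2 : r * (Real.log g - Real.log r) ≤ r * (g / r - 1) :=
      mul_le_mul_of_nonneg_left h1 h0.le
    have h3 : r * (g / r - 1) = g - r := by field_simp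
    nlinarith

lemma gibbs {X : Type*} [Fintype X] (p g : X → ℝ) (hp : ∀ x, 0 ≤ p x)
    (hg : ∀ x, 0 ≤ g x) (h : ∀ x, 0 < p x → 0 < g x)
    (hsum : ∑ x, g x ≤ ∑ x, p x) :
    ∑ x, p x * Real.log (g x) ≤ ∑ x, p x * Real.log (p x) := by
  have key : ∑ x, (p x - g x) ≤
      ∑ x, (p x * Real.log (p x) - p x * Real.log (g x)) :=
    Finset.sum_le_sum fun x _ => pointwise_gibbs _ _ (hp x) (hg x) (h x)
  simp only [Finset.sum_sub_distrib] at key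
  linarith

lemma MI_eq {X Y : Type*} [Fintype X] [Fintype Y] (p : X × Y → ℝ) :
    MI p = (∑ x, p x * Real.log (p x))
      - (∑ x, (∑ y, p (x, y)) * Real.log (∑ y, p (x, y)))
      - (∑ y, (∑ x, p (x, y)) * Real.log (∑ x, p (x, y))) := by
  simp only [MI, H]; ring

lemma main_aux {A' B : Type*} [Fintype A'] [Fintype B] (n : ℕ)
    (R : Fin n → A' × B → ℝ) (q : Fin n → ℝ) (PB : B → ℝ)
    (hq : ∀ i, 0 ≤ q i) (hq1 : ∑ i, q i = 1)
    (hRnn : ∀ i x, 0 ≤ R i x)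
    (hRsum : ∀ i, ∑ x, R i x = 1)
    (hRB : ∀ i b, ∑ a', R i (a', b) = PB b) :
    MI (fun x => ∑ i, q i * R i x) ≤ ∑ i, q i * MI (R i) := by
  classical
  set M : A' × B → ℝ := fun x => ∑ i, q i * R i x with hMdef
  set RA : Fin n → A' → ℝ := fun i a' => ∑ b, R i (a', b) with hRAdef
  set MA : A' → ℝ := fun a' => ∑ b, M (a', b) with hMAdef
  have hMnn : ∀ x, 0 ≤ M x := fun x =>
    Finset.sum_nonneg fun i _ => mul_nonneg (hq i) (hRnn i x)
  have hRAnn : ∀ i a', 0 ≤ RA i a' := fun i a' =>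
    Finset.sum_nonneg fun b _ => hRnn i (a', b)
  have hMAnn : ∀ a', 0 ≤ MA a' := fun a' =>
    Finset.sum_nonneg fun b _ => hMnn (a', b)
  have hMB : ∀ b, ∑ a', M (a', b) = PB b := by
    intro b
    calc ∑ a', M (a', b) = ∑ i, q i * ∑ a', R i (a', b) := by
          rw [Finset.sum_comm]
          exact Finset.sum_congr rfl fun i _ => (Finset.mul_sum _ _ _).symm
      _ = ∑ i, q i * PB b := Finset.sum_congr rfl fun i _ => by rw [hRB]
      _ = PB b := by rw [← Finset.sum_mul, hq1, one_mul]
  -- entropy-sum quantities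
  set SM : ℝ := ∑ x, M x * Real.log (M x) with hSM
  set SMA : ℝ := ∑ a', MA a' * Real.log (MA a') with hSMA
  set SPB : ℝ := ∑ b, PB b * Real.log (PB b) with hSPB
  set SR : Fin n → ℝ := fun i => ∑ x, R i x * Real.log (R i x) with hSR
  set SRA : Fin n → ℝ := fun i => ∑ a', RA i a' * Real.log (RA i a') with hSRA
  -- rewrite MI's
  have eM : MI M = SM - SMA - SPB := by
    rw [MI_eq]
    congr 1
    exact Finset.sum_congr rfl fun b _ => by rw [hMB]
  have eR : ∀ i, MI (R i) = SR i - SRA i - SPB := by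
    intro i
    rw [MI_eq]
    congr 1
    exact Finset.sum_congr rfl fun b _ => by rw [hRB]
  rw [eM]
  have eRHS : ∑ i, q i * MI (R i) = (∑ i, q i * (SR i - SRA i)) - SPB := by
    calc ∑ i, q i * MI (R i) = ∑ i, (q i * (SR i - SRA i) - q i * SPB) := by
          refine Finset.sum_congr rfl fun i _ => ?_
          rw [eR i]; ring
      _ = (∑ i, q i * (SR i - SRA i)) - (∑ i, q i) * SPB := by
          rw [Finset.sum_sub_distrib, Finset.sum_mul]
      _ = (∑ i, q i * (SR i - SRA i)) - SPB := by rw [hq1, one_mul]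
  rw [eRHS]
  have main : SM - SMA ≤ ∑ i, q i * (SR i - SRA i) := by
    -- marginal identities
    have idM : ∑ x : A' × B, M x * Real.log (MA x.1) = SMA := by
      rw [Fintype.sum_prod_type, hSMA]
      refine Finset.sum_congr rfl fun a' _ => ?_
      rw [show (fun y => M (a', y) * Real.log (MA (a', y).1))
          = fun y => M (a', y) * Real.log (MA a') from rfl, ← Finset.sum_mul]
    have idR : ∀ i, ∑ x : A' × B, R i x * Real.log (RA i x.1) = SRA i := by
      intro i
      rw [Fintype.sum_prod_type, hSRA]
      refine Finset.sum_congr rfl fun a' _ => ?_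
      rw [show (fun y => R i (a', y) * Real.log (RA i (a', y).1))
          = fun y => R i (a', y) * Real.log (RA i a') from rfl, ← Finset.sum_mul]
    have lhs_eq : SM - SMA =
        ∑ x, M x * (Real.log (M x) - Real.log (MA x.1)) := by
      simp only [mul_sub, Finset.sum_sub_distrib, idM, hSM]
    have rhs_eq : ∀ i, SR i - SRA i =
        ∑ x, R i x * (Real.log (R i x) - Real.log (RA i x.1)) := by
      intro i
      simp only [mul_sub, Finset.sum_sub_distrib, idR i, hSR]
    have swap : ∑ x, M x * (Real.log (M x) - Real.log (MA x.1)) =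
        ∑ i, q i * ∑ x, R i x * (Real.log (M x) - Real.log (MA x.1)) := by
      simp only [hMdef, Finset.sum_mul, Finset.mul_sum]
      rw [Finset.sum_comm]
      exact Finset.sum_congr rfl fun i _ =>
        Finset.sum_congr rfl fun x _ => by ring
    rw [lhs_eq, swap]
    refine Finset.sum_le_sum fun i _ => ?_
    rw [rhs_eq i]
    rcases eq_or_lt_of_le (hq i) with h0 | h0
    · simp [← h0]
    refine mul_le_mul_of_nonneg_left ?_ h0.le
    -- per-channel inequality via Gibbs
    set g : A' × B → ℝ := fun x => M x * RA i x.1 / MA x.1 with hgdef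
    have hgnn : ∀ x, 0 ≤ g x := fun x =>
      div_nonneg (mul_nonneg (hMnn x) (hRAnn i x.1)) (hMAnn x.1)
    have hpos : ∀ x : A' × B, 0 < R i x →
        0 < M x ∧ 0 < MA x.1 ∧ 0 < RA i x.1 := by
      intro x hx
      have hMx : 0 < M x := by
        have h1 : q i * R i x ≤ M x :=
          Finset.single_le_sum (f := fun j => q j * R j x)
            (fun j _ => mul_nonneg (hq j) (hRnn j x)) (Finset.mem_univ i)
        nlinarith
      have hRAx : 0 < RA i x.1 := by
        have h1 : R i (x.1, x.2) ≤ RA i x.1 :=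
          Finset.single_le_sum (f := fun b => R i (x.1, b))
            (fun b _ => hRnn i (x.1, b)) (Finset.mem_univ x.2)
        simpa using lt_of_lt_of_le hx (by simpa using h1)
      have hMAx : 0 < MA x.1 := by
        have h1 : M (x.1, x.2) ≤ MA x.1 :=
          Finset.single_le_sum (f := fun b => M (x.1, b))
            (fun b _ => hMnn (x.1, b)) (Finset.mem_univ x.2)
        exact lt_of_lt_of_le hMx (by simpa using h1)
      exact ⟨hMx, hMAx, hRAx⟩
    have hgpos : ∀ x, 0 < R i x → 0 < g x := by
      intro x hx
      obtain ⟨h1, h2, h3⟩ := hpos x hx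
      exact div_pos (mul_pos h1 h3) h2
    have hgsum : ∑ x, g x ≤ ∑ x, R i x := by
      rw [hRsum i, Fintype.sum_prod_type]
      have : ∑ a', ∑ b, g (a', b) ≤ ∑ a', RA i a' := by
        refine Finset.sum_le_sum fun a' _ => ?_
        by_cases hMA0 : MA a' = 0
        · have hM0 : ∀ b, M (a', b) = 0 := by
            intro b
            have := (Finset.sum_eq_zero_iff_of_nonneg
              (fun b _ => hMnn (a', b))).mp hMA0
            exact this b (Finset.mem_univ b)
          have : ∑ b, g (a', b) = 0 := by
            refine Finset.sum_eq_zero fun b _ => ?_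
            simp [hgdef, hM0 b]
          rw [this]; exact hRAnn i a'
        · have : ∑ b, g (a', b) = RA i a' := by
            calc ∑ b, g (a', b) = (∑ b, M (a', b)) * RA i a' / MA a' := by
                  simp only [hgdef]
                  rw [← Finset.sum_div, ← Finset.sum_mul]
              _ = MA a' * RA i a' / MA a' := rfl
              _ = RA i a' := by field_simp
          rw [this]
      calc ∑ a', ∑ b, g (a', b) ≤ ∑ a', RA i a' := this
        _ = ∑ a', ∑ b, R i (a', b) := rfl
        _ = 1 := by rw [← Fintype.sum_prod_type, hRsum i]
    have hgibbs := gibbs (R i) g (hRnn i) hgnn hgpos hgsum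
    have hlog : ∀ x : A' × B, R i x * (Real.log (M x) - Real.log (MA x.1)) =
        R i x * Real.log (g x) - R i x * Real.log (RA i x.1) := by
      intro x
      rcases eq_or_lt_of_le (hRnn i x) with h0 | h0
      · simp [← h0]
      · obtain ⟨h1, h2, h3⟩ := hpos x h0
        have : Real.log (g x) = Real.log (M x) + Real.log (RA i x.1)
            - Real.log (MA x.1) := by
          rw [show g x = M x * RA i x.1 / MA x.1 from rfl,
            Real.log_div (mul_ne_zero (ne_of_gt h1) (ne_of_gt h3)) (ne_of_gt h2),
            Real.log_mul (ne_of_gt h1) (ne_of_gt h3)]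
        rw [this]; ring
    calc ∑ x, R i x * (Real.log (M x) - Real.log (MA x.1))
        = (∑ x, R i x * Real.log (g x)) - ∑ x, R i x * Real.log (RA i x.1) := by
          rw [← Finset.sum_sub_distrib]
          exact Finset.sum_congr rfl fun x _ => hlog x
      _ ≤ (∑ x, R i x * Real.log (R i x)) - ∑ x, R i x * Real.log (RA i x.1) := by
          linarith
      _ = ∑ x, R i x * (Real.log (R i x) - Real.log (RA i x.1)) := by
          rw [← Finset.sum_sub_distrib]
          exact Finset.sum_congr rfl fun x _ => (mul_sub _ _ _).symm
  linarith

/-- convexity of `W ↦ I(A':B)_{W(P)}` on the set of channels. -/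
theorem stmt_2 {A A' B : Type*} [Fintype A] [Fintype A'] [Fintype B]
    (P : A × B → ℝ) (hP : IsDist P)
    (n : ℕ) (W : Fin n → A → A' → ℝ) (hW : ∀ i, IsChannel (W i))
    (q : Fin n → ℝ) (hq : ∀ i, 0 ≤ q i) (hq1 : ∑ i, q i = 1) :
    MI (applyFst (fun a a' => ∑ i, q i * W i a a') P) ≤
      ∑ i, q i * MI (applyFst (W i) P) := by
  classical
  have hPnn := hP.1
  have hRnn : ∀ i (x : A' × B), 0 ≤ applyFst (W i) P x := fun i x =>
    Finset.sum_nonneg fun a _ => mul_nonneg ((hW i).1 a x.1) (hPnn _)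
  have hRB : ∀ i b, ∑ a', applyFst (W i) P (a', b) = ∑ a, P (a, b) := by
    intro i b
    calc ∑ a', applyFst (W i) P (a', b)
        = ∑ a', ∑ a, W i a a' * P (a, b) := rfl
      _ = ∑ a, ∑ a', W i a a' * P (a, b) := Finset.sum_comm
      _ = ∑ a, P (a, b) := Finset.sum_congr rfl fun a _ => by
            rw [← Finset.sum_mul, (hW i).2 a, one_mul]
  have hRsum : ∀ i, ∑ x : A' × B, applyFst (W i) P x = 1 := by
    intro i
    calc ∑ x : A' × B, applyFst (W i) P x
        = ∑ a', ∑ b, applyFst (W i) P (a', b) := Fintype.sum_prod_type _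
      _ = ∑ b, ∑ a', applyFst (W i) P (a', b) := Finset.sum_comm
      _ = ∑ b, ∑ a, P (a, b) := Finset.sum_congr rfl fun b _ => hRB i b
      _ = ∑ a, ∑ b, P (a, b) := Finset.sum_comm
      _ = 1 := by rw [← Fintype.sum_prod_type]; exact hP.2
  have hMeq : applyFst (fun a a' => ∑ i, q i * W i a a') P
      = fun x => ∑ i, q i * applyFst (W i) P x := by
    funext x
    calc applyFst (fun a a' => ∑ i, q i * W i a a') P x
        = ∑ a, (∑ i, q i * W i a x.1) * P (a, x.2) := rfl
      _ = ∑ a, ∑ i, q i * W i a x.1 * P (a, x.2) := Finset.sum_congr rfl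
            fun a _ => by rw [Finset.sum_mul]
      _ = ∑ i, ∑ a, q i * W i a x.1 * P (a, x.2) := Finset.sum_comm
      _ = ∑ i, q i * applyFst (W i) P x := Finset.sum_congr rfl fun i _ => by
            rw [show applyFst (W i) P x = ∑ a, W i a x.1 * P (a, x.2) from rfl,
              Finset.mul_sum]
            exact Finset.sum_congr rfl fun a _ => by ring
  rw [hMeq]
  exact main_aux n (fun i => applyFst (W i) P) q (fun b => ∑ a, P (a, b))
    hq hq1 hRnn hRsum hRB
end

section
/- Fix finite types A, A', B (with A' nonempty) and a probability distribution P on A × B. There exists a deterministic channel W★ from A to A' (i.e. one induced by a function f : A → A') such that I(A':B)_{W★(P)} ≥ I(A':B)_{W(P)} for every channel W from A to A'. In other words, the maximum of the mutual information I(A':B)_{W(P)} over all channels W is attained by a deterministic map. -/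
open Finset

lemma logSum {ι : Type*} (s : Finset ι) (x y : ι → ℝ)
    (hx : ∀ i ∈ s, 0 ≤ x i) (hy : ∀ i ∈ s, 0 ≤ y i)
    (h0 : ∀ i ∈ s, y i = 0 → x i = 0) :
    (∑ i ∈ s, x i) * (Real.log (∑ i ∈ s, x i) - Real.log (∑ i ∈ s, y i))
      ≤ ∑ i ∈ s, x i * (Real.log (x i) - Real.log (y i)) := by
  set X := ∑ i ∈ s, x i with hX
  set Y := ∑ i ∈ s, y i with hY
  by_cases hY0 : Y = 0
  · have hyz : ∀ i ∈ s, y i = 0 :=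
      (Finset.sum_eq_zero_iff_of_nonneg hy).mp hY0
    have hxz : ∀ i ∈ s, x i = 0 := fun i hi => h0 i hi (hyz i hi)
    have hXz : X = 0 := Finset.sum_eq_zero hxz
    rw [hXz, Finset.sum_eq_zero (fun i hi => by rw [hxz i hi, zero_mul])]
    simp
  · have hYpos : 0 < Y := lt_of_le_of_ne (Finset.sum_nonneg hy) (Ne.symm hY0)
    by_cases hX0 : X = 0
    · have hxz : ∀ i ∈ s, x i = 0 :=
        (Finset.sum_eq_zero_iff_of_nonneg hx).mp hX0
      rw [hX0, Finset.sum_eq_zero (fun i hi => by rw [hxz i hi, zero_mul])]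
      simp
    have hXpos : 0 < X := lt_of_le_of_ne (Finset.sum_nonneg hx) (Ne.symm hX0)
    -- Jensen
    set w : ι → ℝ := fun i => y i / Y with hw
    set p : ι → ℝ := fun i => if y i = 0 then 0 else x i / y i with hp
    have hw0 : ∀ i ∈ s, 0 ≤ w i := fun i hi => div_nonneg (hy i hi) hYpos.le
    have hw1 : ∑ i ∈ s, w i = 1 := by
      rw [← Finset.sum_div, ← hY, div_self hY0]
    have hmem : ∀ i ∈ s, p i ∈ Set.Ici (0:ℝ) := by
      intro i hi
      simp only [hp, Set.mem_Ici]
      split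
      · exact le_refl 0
      · exact div_nonneg (hx i hi) (hy i hi)
    have hsum : ∑ i ∈ s, w i • p i = X / Y := by
      rw [hX, Finset.sum_div]
      refine Finset.sum_congr rfl (fun i hi => ?_)
      by_cases h : y i = 0
      · simp [hw, hp, h, h0 i hi h]
      · simp only [hw, hp, if_neg h, smul_eq_mul]
        field_simp
    have j := (Real.convexOn_mul_log.map_sum_le hw0 hw1 hmem)
    rw [hsum] at j
    have hrhs : ∑ i ∈ s, w i • (p i * Real.log (p i))
        = (∑ i ∈ s, x i * (Real.log (x i) - Real.log (y i))) / Y := by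
      rw [Finset.sum_div]
      refine Finset.sum_congr rfl (fun i hi => ?_)
      by_cases h : y i = 0
      · simp [hw, hp, h, h0 i hi h]
      · by_cases hxi : x i = 0
        · simp [hw, hp, h, hxi]
        · simp only [hw, hp, if_neg h, smul_eq_mul]
          rw [Real.log_div hxi h]
          field_simp
    rw [hrhs] at j
    have j2 : (X / Y) * Real.log (X / Y) * Y
        ≤ ∑ i ∈ s, x i * (Real.log (x i) - Real.log (y i)) := by
      calc (X / Y) * Real.log (X / Y) * Y
          ≤ (∑ i ∈ s, x i * (Real.log (x i) - Real.log (y i))) / Y * Y :=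
            mul_le_mul_of_nonneg_right j hYpos.le
        _ = _ := by field_simp
    calc X * (Real.log X - Real.log Y) = (X / Y) * Real.log (X / Y) * Y := by
          rw [Real.log_div hX0 hY0]; field_simp
      _ ≤ _ := j2

lemma mul_log_scale (c u v : ℝ) (hu : 0 ≤ u) (huv : u ≤ v) :
    (c * u) * (Real.log (c * u) - Real.log (c * v))
      = c * (u * (Real.log u - Real.log v)) := by
  rcases eq_or_ne c 0 with rfl | hc
  · simp
  rcases eq_or_ne u 0 with rfl | hu0
  · simp
  have hv : v ≠ 0 := fun h => hu0 (le_antisymm (h ▸ huv) hu)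
  rw [Real.log_mul hc hu0, Real.log_mul hc hv]
  ring

noncomputable def Dq {A' B : Type*} [Fintype A'] [Fintype B] (q : A' × B → ℝ) : ℝ :=
  ∑ a', ∑ b, q (a', b) * (Real.log (q (a', b)) - Real.log (∑ b', q (a', b')))

lemma MI_eq_s3 {A' B : Type*} [Fintype A'] [Fintype B] (q : A' × B → ℝ) :
    MI q = H (fun b => ∑ a', q (a', b)) + Dq q := by
  simp only [MI, H, Dq, mul_sub, Finset.sum_sub_distrib]
  have h1 : ∑ a' : A', ∑ b : B, q (a', b) * Real.log (∑ b', q (a', b'))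
      = ∑ a' : A', (∑ b, q (a', b)) * Real.log (∑ b', q (a', b')) := by
    refine Finset.sum_congr rfl (fun a' _ => ?_)
    rw [Finset.sum_mul]
  rw [h1, Fintype.sum_prod_type]
  ring

lemma Dq_convex {ι A' B : Type*} [Fintype ι] [Fintype A'] [Fintype B]
    (c : ι → ℝ) (hc : ∀ i, 0 ≤ c i) (Q : ι → A' × B → ℝ)
    (hQ : ∀ i z, 0 ≤ Q i z) :
    Dq (fun z => ∑ i, c i * Q i z) ≤ ∑ i, c i * Dq (Q i) := by
  have key : ∀ (a' : A') (b : B),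
      (∑ i, c i * Q i (a', b)) *
          (Real.log (∑ i, c i * Q i (a', b))
            - Real.log (∑ b', ∑ i, c i * Q i (a', b')))
        ≤ ∑ i, c i * (Q i (a', b) *
            (Real.log (Q i (a', b)) - Real.log (∑ b', Q i (a', b')))) := by
    intro a' b
    have hswap : ∑ b', ∑ i, c i * Q i (a', b')
        = ∑ i, c i * ∑ b', Q i (a', b') := by
      rw [Finset.sum_comm]
      exact Finset.sum_congr rfl (fun i _ => (Finset.mul_sum _ _ _).symm)
    rw [hswap]
    have hle : ∀ i, Q i (a', b) ≤ ∑ b', Q i (a', b') :=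
      fun i => Finset.single_le_sum (fun b' _ => hQ i (a', b')) (Finset.mem_univ b)
    calc (∑ i, c i * Q i (a', b)) *
          (Real.log (∑ i, c i * Q i (a', b))
            - Real.log (∑ i, c i * ∑ b', Q i (a', b')))
        ≤ ∑ i, (c i * Q i (a', b)) *
            (Real.log (c i * Q i (a', b)) - Real.log (c i * ∑ b', Q i (a', b'))) := by
          refine logSum Finset.univ _ _ (fun i _ => mul_nonneg (hc i) (hQ i _))
            (fun i _ => mul_nonneg (hc i) (Finset.sum_nonneg (fun b' _ => hQ i _)))
            (fun i _ hzero => ?_)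
          rcases mul_eq_zero.mp hzero with h | h
          · rw [h, zero_mul]
          · have : Q i (a', b) = 0 := le_antisymm (h ▸ hle i) (hQ i _)
            rw [this, mul_zero]
      _ = ∑ i, c i * (Q i (a', b) *
            (Real.log (Q i (a', b)) - Real.log (∑ b', Q i (a', b')))) :=
          Finset.sum_congr rfl (fun i _ => mul_log_scale _ _ _ (hQ i _) (hle i))
  calc Dq (fun z => ∑ i, c i * Q i z)
      ≤ ∑ a', ∑ b, ∑ i, c i * (Q i (a', b) *
          (Real.log (Q i (a', b)) - Real.log (∑ b', Q i (a', b')))) :=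
        Finset.sum_le_sum (fun a' _ => Finset.sum_le_sum (fun b _ => key a' b))
    _ = ∑ i, c i * Dq (Q i) := by
        simp only [Dq, Finset.mul_sum]
        exact (Finset.sum_congr rfl fun a' _ => Finset.sum_comm).trans Finset.sum_comm

/-- the maximum of `I(A':B)_{W(P)}` over channels `W : A → A'`
is attained by a deterministic channel, i.e. one induced by a function. -/
theorem stmt_3 {A A' B : Type*} [Fintype A] [Fintype A'] [Fintype B] [Nonempty A'] [DecidableEq A']
    (P : A × B → ℝ) (hP : IsDist P) :
    ∃ f : A → A', ∀ W : A → A' → ℝ, IsChannel W →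
      MI (applyFst W P) ≤
        MI (applyFst (fun a a' => if a' = f a then (1 : ℝ) else 0) P) := by
  classical
  obtain ⟨hPnn, hPsum⟩ := hP
  set det : (A → A') → A → A' → ℝ := fun f a a' => if a' = f a then (1:ℝ) else 0 with hdet
  obtain ⟨f0, -, hf0⟩ := Finset.exists_max_image (Finset.univ : Finset (A → A'))
      (fun f => Dq (applyFst (det f) P)) ⟨fun _ => Classical.arbitrary A', Finset.mem_univ _⟩
  refine ⟨f0, fun W hW => ?_⟩
  obtain ⟨hWnn, hWsum⟩ := hW
  set c : (A → A') → ℝ := fun f => ∏ a, W a (f a) with hc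
  have hcnn : ∀ f, 0 ≤ c f := fun f => Finset.prod_nonneg (fun a _ => hWnn a (f a))
  have hcsum : ∑ f, c f = 1 := by
    rw [hc, ← Fintype.prod_sum]
    simp [hWsum]
  have hkey : ∀ a0 a0', ∑ f : A → A', (if a0' = f a0 then (1:ℝ) else 0) * c f = W a0 a0' := by
    intro a0 a0'
    set g : A → A' → ℝ := fun a j => if a = a0 then (if a0' = j then W a j else 0) else W a j
      with hg
    have h1 : ∀ f : A → A', (if a0' = f a0 then (1:ℝ) else 0) * c f = ∏ a, g a (f a) := by
      intro f
      by_cases h : a0' = f a0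
      · rw [if_pos h, one_mul, hc]
        refine Finset.prod_congr rfl fun a _ => ?_
        by_cases ha : a = a0
        · subst ha; simp [hg, h]
        · simp [hg, ha]
      · rw [if_neg h, zero_mul]
        symm
        apply Finset.prod_eq_zero (Finset.mem_univ a0)
        simp [hg, h]
    simp only [h1]
    rw [← Fintype.prod_sum g]
    rw [Finset.prod_eq_single a0]
    · simp only [hg, if_pos rfl]
      rw [Finset.sum_ite_eq Finset.univ a0' (W a0)]
      simp
    · intro a _ ha
      simp only [hg, if_neg ha]
      exact hWsum a
    · intro h; exact absurd (Finset.mem_univ a0) h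
  have hdecomp : ∀ z, applyFst W P z = ∑ f, c f * applyFst (det f) P z := by
    intro z
    simp only [applyFst, hdet, Finset.mul_sum]
    rw [Finset.sum_comm]
    refine Finset.sum_congr rfl fun a _ => ?_
    rw [← hkey a z.1, Finset.sum_mul]
    exact Finset.sum_congr rfl fun f _ => by ring
  have hmargW : (fun b => ∑ a', applyFst W P (a', b)) = fun b : B => ∑ a, P (a, b) := by
    funext b
    simp only [applyFst]
    rw [Finset.sum_comm]
    refine Finset.sum_congr rfl fun a _ => ?_
    rw [← Finset.sum_mul, hWsum, one_mul]
  have hmargdet : ∀ f : A → A',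
      (fun b => ∑ a', applyFst (det f) P (a', b)) = fun b : B => ∑ a, P (a, b) := by
    intro f; funext b
    simp only [applyFst, hdet]
    rw [Finset.sum_comm]
    refine Finset.sum_congr rfl fun a _ => ?_
    rw [← Finset.sum_mul, Finset.sum_ite_eq' Finset.univ (f a) (fun _ => (1:ℝ))]
    simp
  show MI (applyFst W P) ≤ MI (applyFst (det f0) P)
  rw [MI_eq_s3 (applyFst W P), MI_eq_s3 (applyFst (det f0) P), hmargW, hmargdet f0]
  have hdetnn : ∀ (f : A → A') z, 0 ≤ applyFst (det f) P z := by
    intro f z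
    refine Finset.sum_nonneg fun a _ => mul_nonneg ?_ (hPnn _)
    simp only [hdet]
    split <;> norm_num
  have step1 : Dq (applyFst W P) ≤ ∑ f, c f * Dq (applyFst (det f) P) := by
    have he : applyFst W P = fun z => ∑ f, c f * applyFst (det f) P z := funext hdecomp
    rw [he]
    exact Dq_convex c hcnn _ hdetnn
  have step2 : ∑ f, c f * Dq (applyFst (det f) P) ≤ Dq (applyFst (det f0) P) := by
    calc ∑ f, c f * Dq (applyFst (det f) P)
        ≤ ∑ f, c f * Dq (applyFst (det f0) P) :=
          Finset.sum_le_sum fun f _ =>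
            mul_le_mul_of_nonneg_left (hf0 f (Finset.mem_univ f)) (hcnn f)
      _ = Dq (applyFst (det f0) P) := by rw [← Finset.sum_mul, hcsum, one_mul]
  linarith
end

section
/- Let P be a probability distribution on the finite product type A × B × C, let R be a channel from A to a finite type A', and let R(P) denote the distribution on A' × B × C obtained by applying R to the A-component of P. Then 0 ≤ I(A' : C | B)_{R(P)} ≤ I(A : C | B)_P (data processing inequality for conditional mutual information under a channel acting on one argument). -/
open Finset

set_option linter.unusedSectionVars false
set_option linter.unusedVariables false

/-! ### Auxiliary machinery -/

theorem sum_rot3 {α β γ M : Type*} [Fintype α] [Fintype β] [Fintype γ] [AddCommMonoid M]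
    (f : α → β → γ → M) :
    ∑ a, ∑ b, ∑ c, f a b c = ∑ b, ∑ c, ∑ a, f a b c := by
  calc ∑ a, ∑ b, ∑ c, f a b c = ∑ b, ∑ a, ∑ c, f a b c := Finset.sum_comm
    _ = ∑ b, ∑ c, ∑ a, f a b c := Finset.sum_congr rfl fun b _ => Finset.sum_comm

theorem sum_comm4 {α β γ δ M : Type*} [Fintype α] [Fintype β] [Fintype γ] [Fintype δ]
    [AddCommMonoid M] (f : α → β → γ → δ → M) :
    ∑ a, ∑ b, ∑ c, ∑ d, f a b c d = ∑ d, ∑ b, ∑ c, ∑ a, f a b c d := by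
  calc ∑ a, ∑ b, ∑ c, ∑ d, f a b c d
      = ∑ a, ∑ d, ∑ b, ∑ c, f a b c d :=
        Finset.sum_congr rfl fun a _ => (sum_rot3 (fun d b c => f a b c d)).symm
    _ = ∑ d, ∑ a, ∑ b, ∑ c, f a b c d := Finset.sum_comm
    _ = ∑ d, ∑ b, ∑ c, ∑ a, f a b c d := Finset.sum_congr rfl fun d _ => sum_rot3 _

theorem gibbs_s7 (a b : ℝ) (ha : 0 ≤ a) (hb : 0 ≤ b) (h : 0 < a → 0 < b) :
    a - b ≤ a * (Real.log a - Real.log b) := by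
  rcases eq_or_lt_of_le ha with rfl | ha'
  · simpa using hb
  · have hb' := h ha'
    have hlog : Real.log (b / a) ≤ b / a - 1 :=
      Real.log_le_sub_one_of_pos (div_pos hb' ha')
    rw [Real.log_div (ne_of_gt hb') (ne_of_gt ha')] at hlog
    have := mul_le_mul_of_nonneg_left hlog ha
    rw [mul_sub, mul_sub, mul_div_cancel₀ _ (ne_of_gt ha'), mul_one] at this
    nlinarith

theorem sum_gibbs {ι : Type*} (s : Finset ι) (u v : ι → ℝ)
    (hu : ∀ i ∈ s, 0 ≤ u i) (hv : ∀ i ∈ s, 0 ≤ v i)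
    (h : ∀ i ∈ s, 0 < u i → 0 < v i)
    (hsum : ∑ i ∈ s, v i = ∑ i ∈ s, u i) :
    0 ≤ ∑ i ∈ s, u i * (Real.log (u i) - Real.log (v i)) := by
  have key : ∑ i ∈ s, (u i - v i) ≤ ∑ i ∈ s, u i * (Real.log (u i) - Real.log (v i)) :=
    Finset.sum_le_sum fun i hi => gibbs_s7 _ _ (hu i hi) (hv i hi) (h i hi)
  rw [Finset.sum_sub_distrib, hsum, sub_self] at key
  exact key

section Marginals

variable {X Y Z : Type*} [Fintype X] [Fintype Y] [Fintype Z]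

/-- Marginal on the middle coordinate. -/
noncomputable def mY (p : X × Y × Z → ℝ) (y : Y) : ℝ := ∑ x, ∑ z, p (x, y, z)
/-- Marginal on the first two coordinates. -/
noncomputable def mXY (p : X × Y × Z → ℝ) (x : X) (y : Y) : ℝ := ∑ z, p (x, y, z)
/-- Marginal on the last two coordinates. -/
noncomputable def mYZ (p : X × Y × Z → ℝ) (y : Y) (z : Z) : ℝ := ∑ x, p (x, y, z)

variable {p : X × Y × Z → ℝ}

theorem mXY_nonneg (hp : ∀ t, 0 ≤ p t) (x : X) (y : Y) : 0 ≤ mXY p x y :=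
  Finset.sum_nonneg fun z _ => hp _
theorem mYZ_nonneg (hp : ∀ t, 0 ≤ p t) (y : Y) (z : Z) : 0 ≤ mYZ p y z :=
  Finset.sum_nonneg fun x _ => hp _
theorem mY_nonneg (hp : ∀ t, 0 ≤ p t) (y : Y) : 0 ≤ mY p y :=
  Finset.sum_nonneg fun x _ => Finset.sum_nonneg fun z _ => hp _
theorem mXY_pos (hp : ∀ t, 0 ≤ p t) {x : X} {y : Y} {z : Z} (h : 0 < p (x, y, z)) :
    0 < mXY p x y :=
  lt_of_lt_of_le h (Finset.single_le_sum (fun z _ => hp (x, y, z)) (mem_univ z))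
theorem mYZ_pos (hp : ∀ t, 0 ≤ p t) {x : X} {y : Y} {z : Z} (h : 0 < p (x, y, z)) :
    0 < mYZ p y z :=
  lt_of_lt_of_le h (Finset.single_le_sum (fun x _ => hp (x, y, z)) (mem_univ x))
theorem mY_pos (hp : ∀ t, 0 ≤ p t) {x : X} {y : Y} {z : Z} (h : 0 < p (x, y, z)) :
    0 < mY p y :=
  lt_of_lt_of_le (mXY_pos hp h)
    (Finset.single_le_sum (fun x _ => mXY_nonneg hp x y) (mem_univ x))
theorem mY_eq_sum_mYZ (y : Y) : mY p y = ∑ z, mYZ p y z := Finset.sum_comm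
theorem mY_total (hp : ∑ t, p t = 1) : ∑ y, mY p y = 1 := by
  have h : ∑ x, ∑ y, ∑ z, p (x, y, z) = 1 := by
    simpa [Fintype.sum_prod_type] using hp
  calc ∑ y, mY p y = ∑ x, ∑ y, ∑ z, p (x, y, z) := Finset.sum_comm
    _ = 1 := h

/-- The key algebraic identity: conditional mutual information as a single sum. -/
theorem CMI_eq_s7 (p : X × Y × Z → ℝ) :
    CMI p = ∑ x, ∑ y, ∑ z, p (x, y, z) *
      (Real.log (p (x, y, z)) + Real.log (mY p y)
        - Real.log (mXY p x y) - Real.log (mYZ p y z)) := by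
  have h1 : H p = -∑ x, ∑ y, ∑ z, p (x, y, z) * Real.log (p (x, y, z)) := by
    simp [H, Fintype.sum_prod_type]
  have h2 : H (fun q : X × Y => ∑ z, p (q.1, q.2, z))
      = -∑ x, ∑ y, ∑ z, p (x, y, z) * Real.log (mXY p x y) := by
    simp only [H, Fintype.sum_prod_type, mXY, Finset.sum_mul]
  have h3 : H (fun yz : Y × Z => ∑ x, p (x, yz.1, yz.2))
      = -∑ x, ∑ y, ∑ z, p (x, y, z) * Real.log (mYZ p y z) := by
    simp only [H, Fintype.sum_prod_type, mYZ]
    congr 1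
    calc ∑ y, ∑ z, (∑ x, p (x, y, z)) * Real.log (∑ x, p (x, y, z))
        = ∑ y, ∑ z, ∑ x, p (x, y, z) * Real.log (∑ x', p (x', y, z)) := by
          simp [Finset.sum_mul]
      _ = ∑ y, ∑ x, ∑ z, p (x, y, z) * Real.log (∑ x', p (x', y, z)) :=
          Finset.sum_congr rfl fun y _ => Finset.sum_comm
      _ = ∑ x, ∑ y, ∑ z, p (x, y, z) * Real.log (∑ x', p (x', y, z)) :=
          Finset.sum_comm
  have h4 : H (fun y : Y => ∑ x, ∑ z, p (x, y, z))
      = -∑ x, ∑ y, ∑ z, p (x, y, z) * Real.log (mY p y) := by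
    simp only [H, mY, Finset.sum_mul]
    congr 1
    exact Finset.sum_comm
  have hX : (fun x : X => ∑ yz : Y × Z, p (x, yz))
      = fun x : X => ∑ y, (fun q : X × Y => ∑ z, p (q.1, q.2, z)) (x, y) := by
    funext x; rw [Fintype.sum_prod_type]
  have hCMI : CMI p = (-H p) - (-H (fun q : X × Y => ∑ z, p (q.1, q.2, z)))
      - (-H (fun yz : Y × Z => ∑ x, p (x, yz.1, yz.2)))
      + (-H (fun y : Y => ∑ x, ∑ z, p (x, y, z))) := by
    simp only [CMI, MI]
    rw [hX]
    have : (fun y : Y => ∑ x, (fun q : X × Y => ∑ z, p (q.1, q.2, z)) (x, y))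
        = fun y : Y => ∑ x, ∑ z, p (x, y, z) := rfl
    rw [this]
    have : (fun yz : Y × Z => ∑ x, p (x, yz)) = fun yz : Y × Z => ∑ x, p (x, yz.1, yz.2) := rfl
    rw [this]
    ring
  rw [hCMI, h1, h2, h3, h4]
  simp only [mul_add, mul_sub, Finset.sum_add_distrib, Finset.sum_sub_distrib]
  ring

/-- Nonnegativity of the CMI sum for a probability distribution. -/
theorem CMI_nonneg_s7 (hp : IsDist p) : 0 ≤ CMI p := by
  rw [CMI_eq_s7]
  obtain ⟨hp0, hp1⟩ := hp
  set v : X × Y × Z → ℝ := fun t => mXY p t.1 t.2.1 * mYZ p t.2.1 t.2.2 / mY p t.2.1 with hv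
  have hterm : ∀ t : X × Y × Z, p t * (Real.log (p t) - Real.log (v t))
      = p t * (Real.log (p t) + Real.log (mY p t.2.1)
        - Real.log (mXY p t.1 t.2.1) - Real.log (mYZ p t.2.1 t.2.2)) := by
    rintro ⟨x, y, z⟩
    rcases eq_or_lt_of_le (hp0 (x, y, z)) with h0 | h0
    · rw [← h0]; ring
    · have h1 := mXY_pos hp0 h0
      have h2 := mYZ_pos hp0 h0
      have h3 := mY_pos hp0 h0
      have : v (x, y, z) = mXY p x y * mYZ p y z / mY p y := rfl
      rw [this, Real.log_div (by positivity) (ne_of_gt h3),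
        Real.log_mul (ne_of_gt h1) (ne_of_gt h2)]
      ring
  have hvsum : ∑ t : X × Y × Z, v t = ∑ t : X × Y × Z, p t := by
    rw [hp1]
    have hy : ∀ y : Y, ∑ x, ∑ z, v (x, y, z) = mY p y := by
      intro y
      have : ∑ x, ∑ z, v (x, y, z) = (∑ x, mXY p x y) * ((∑ z, mYZ p y z) / mY p y) := by
        simp only [hv, mul_div_assoc, ← Finset.mul_sum, ← Finset.sum_div, Finset.sum_mul]
      rw [this]
      have e1 : (∑ x, mXY p x y) = mY p y := rfl
      have e2 : (∑ z, mYZ p y z) = mY p y := Finset.sum_comm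
      rw [e1, e2]
      rcases eq_or_ne (mY p y) 0 with h0 | h0
      · simp [h0]
      · field_simp
    calc ∑ t : X × Y × Z, v t = ∑ x, ∑ y, ∑ z, v (x, y, z) := by
          rw [Fintype.sum_prod_type]
          exact Finset.sum_congr rfl fun x _ => by rw [Fintype.sum_prod_type]
      _ = ∑ y, ∑ x, ∑ z, v (x, y, z) := Finset.sum_comm
      _ = ∑ y, mY p y := Finset.sum_congr rfl fun y _ => hy y
      _ = 1 := mY_total hp1
  have key := sum_gibbs (univ : Finset (X × Y × Z)) p v (fun t _ => hp0 t)
    (fun t _ => div_nonneg (mul_nonneg (mXY_nonneg hp0 _ _) (mYZ_nonneg hp0 _ _)) (mY_nonneg hp0 _))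
    (fun t _ ht => by
      rcases t with ⟨x, y, z⟩
      exact div_pos (mul_pos (mXY_pos hp0 ht) (mYZ_pos hp0 ht)) (mY_pos hp0 ht))
    hvsum
  calc (0:ℝ) ≤ ∑ t : X × Y × Z, p t * (Real.log (p t) - Real.log (v t)) := key
    _ = ∑ t : X × Y × Z, p t * (Real.log (p t) + Real.log (mY p t.2.1)
        - Real.log (mXY p t.1 t.2.1) - Real.log (mYZ p t.2.1 t.2.2)) :=
          Finset.sum_congr rfl fun t _ => hterm t
    _ = ∑ x, ∑ y, ∑ z, p (x, y, z) *
      (Real.log (p (x, y, z)) + Real.log (mY p y)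
        - Real.log (mXY p x y) - Real.log (mYZ p y z)) := by
          rw [Fintype.sum_prod_type]
          exact Finset.sum_congr rfl fun x _ => by rw [Fintype.sum_prod_type]

end Marginals

section DPI

variable {A A' B C : Type*} [Fintype A] [Fintype A'] [Fintype B] [Fintype C]
variable (P : A × B × C → ℝ) (R : A → A' → ℝ)

theorem applyFst_nonneg (hP : ∀ t, 0 ≤ P t) (hR : ∀ a a', 0 ≤ R a a') :
    ∀ t, 0 ≤ applyFst R P t := fun t =>
  Finset.sum_nonneg fun a _ => mul_nonneg (hR a t.1) (hP _)

theorem applyFst_apply (a' : A') (b : B) (c : C) :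
    applyFst R P (a', b, c) = ∑ a, R a a' * P (a, b, c) := rfl

theorem mYZ_applyFst (hR : IsChannel R) (b : B) (c : C) :
    mYZ (applyFst R P) b c = mYZ P b c := by
  unfold mYZ
  calc ∑ a' : A', applyFst R P (a', b, c) = ∑ a', ∑ a, R a a' * P (a, b, c) := rfl
    _ = ∑ a, ∑ a', R a a' * P (a, b, c) := Finset.sum_comm
    _ = ∑ a, (∑ a', R a a') * P (a, b, c) := by
        exact Finset.sum_congr rfl fun a _ => (Finset.sum_mul _ _ _).symm
    _ = ∑ a, P (a, b, c) := by
        exact Finset.sum_congr rfl fun a _ => by rw [hR.2 a, one_mul]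

theorem mY_applyFst (hR : IsChannel R) (b : B) :
    mY (applyFst R P) b = mY P b := by
  rw [mY_eq_sum_mYZ, mY_eq_sum_mYZ]
  exact Finset.sum_congr rfl fun c _ => mYZ_applyFst P R hR b c

theorem mXY_applyFst (a' : A') (b : B) :
    mXY (applyFst R P) a' b = ∑ a, R a a' * mXY P a b := by
  unfold mXY
  calc ∑ c, applyFst R P (a', b, c) = ∑ c, ∑ a, R a a' * P (a, b, c) := rfl
    _ = ∑ a, ∑ c, R a a' * P (a, b, c) := Finset.sum_comm
    _ = ∑ a, R a a' * ∑ c, P (a, b, c) := by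
        exact Finset.sum_congr rfl fun a _ => (Finset.mul_sum _ _ _).symm

theorem applyFst_isDist (hP : IsDist P) (hR : IsChannel R) : IsDist (applyFst R P) := by
  refine ⟨applyFst_nonneg P R hP.1 hR.1, ?_⟩
  have h1 : ∑ x, ∑ y, ∑ z, P (x, y, z) = 1 := by
    simpa [Fintype.sum_prod_type] using hP.2
  calc ∑ t : A' × B × C, applyFst R P t
      = ∑ a', ∑ b, ∑ c, applyFst R P (a', b, c) := by
        rw [Fintype.sum_prod_type]
        exact Finset.sum_congr rfl fun a' _ => by rw [Fintype.sum_prod_type]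
    _ = ∑ b, ∑ c, ∑ a', applyFst R P (a', b, c) := sum_rot3 _
    _ = ∑ b, ∑ c, mYZ P b c :=
        Finset.sum_congr rfl fun b _ => Finset.sum_congr rfl fun c _ =>
          mYZ_applyFst P R hR b c
    _ = ∑ b, ∑ c, ∑ a, P (a, b, c) := rfl
    _ = ∑ a, ∑ b, ∑ c, P (a, b, c) := (sum_rot3 _).symm
    _ = 1 := h1

theorem CMI_DPI (hP : IsDist P) (hR : IsChannel R) :
    CMI (applyFst R P) ≤ CMI P := by
  obtain ⟨hP0, hP1⟩ := hP
  set q : A' × B × C → ℝ := applyFst R P with hq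
  have hq0 : ∀ t, 0 ≤ q t := applyFst_nonneg P R hP0 hR.1
  -- u and v over the 4-fold index
  set u : A' × B × C × A → ℝ := fun t => R t.2.2.2 t.1 * P (t.2.2.2, t.2.1, t.2.2.1) with hu
  set v : A' × B × C × A → ℝ := fun t =>
    R t.2.2.2 t.1 * mXY P t.2.2.2 t.2.1 * (q (t.1, t.2.1, t.2.2.1) / mXY q t.1 t.2.1) with hv
  -- single-term bound on q by one summand
  have hq_ge : ∀ (a : A) (a' : A') (b : B) (c : C), R a a' * P (a, b, c) ≤ q (a', b, c) :=
    fun a a' b c =>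
      Finset.single_le_sum (f := fun a => R a a' * P (a, b, c))
        (fun a _ => mul_nonneg (hR.1 a a') (hP0 _)) (mem_univ a)
  have hq_le : ∀ (a' : A') (b : B) (c : C), q (a', b, c) ≤ mXY q a' b :=
    fun a' b c =>
      Finset.single_le_sum (f := fun c => q (a', b, c)) (fun c _ => hq0 _) (mem_univ c)
  -- positivity transfer
  have hpos : ∀ t : A' × B × C × A, 0 < u t → 0 < v t := by
    rintro ⟨a', b, c, a⟩ ht
    simp only [hu] at ht
    have hR' : 0 < R a a' := by
      rcases (hR.1 a a').lt_or_eq with h | h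
      · exact h
      · exfalso; rw [← h, zero_mul] at ht; exact lt_irrefl _ ht
    have hPt : 0 < P (a, b, c) := by
      rcases (hP0 (a, b, c)).lt_or_eq with h | h
      · exact h
      · exfalso; rw [← h, mul_zero] at ht; exact lt_irrefl _ ht
    have h1 : 0 < mXY P a b := mXY_pos hP0 hPt
    have h2 : 0 < q (a', b, c) := lt_of_lt_of_le (mul_pos hR' hPt) (hq_ge a a' b c)
    have h3 : 0 < mXY q a' b := mXY_pos hq0 h2
    exact mul_pos (mul_pos hR' h1) (div_pos h2 h3)
  -- sums of u and v agree
  have husum : ∑ t : A' × B × C × A, u t = ∑ a', ∑ b, ∑ c, q (a', b, c) := by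
    rw [Fintype.sum_prod_type]
    refine Finset.sum_congr rfl fun a' _ => ?_
    rw [Fintype.sum_prod_type]
    refine Finset.sum_congr rfl fun b _ => ?_
    rw [Fintype.sum_prod_type]
    exact Finset.sum_congr rfl fun c _ => rfl
  have hvsum : ∑ t : A' × B × C × A, v t = ∑ a', ∑ b, ∑ c, q (a', b, c) := by
    rw [Fintype.sum_prod_type]
    refine Finset.sum_congr rfl fun a' _ => ?_
    rw [Fintype.sum_prod_type]
    refine Finset.sum_congr rfl fun b _ => ?_
    rw [Fintype.sum_prod_type]
    refine Finset.sum_congr rfl fun c _ => ?_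
    have e1 : ∑ a, v (a', b, c, a)
        = (∑ a, R a a' * mXY P a b) * (q (a', b, c) / mXY q a' b) := by
      simp only [hv, Finset.sum_mul]
    rw [e1, ← mXY_applyFst P R a' b]
    rcases eq_or_ne (mXY q a' b) 0 with h0 | h0
    · have hz : q (a', b, c) = 0 := le_antisymm (h0 ▸ hq_le a' b c) (hq0 _)
      rw [hz]
      simp
    · rw [mul_comm, div_mul_cancel₀ _ h0]
  -- termwise identity
  have hterm : ∀ t : A' × B × C × A,
      u t * (Real.log (u t) - Real.log (v t))
      = R t.2.2.2 t.1 * P (t.2.2.2, t.2.1, t.2.2.1) *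
        ((Real.log (P (t.2.2.2, t.2.1, t.2.2.1)) + Real.log (mY P t.2.1)
          - Real.log (mXY P t.2.2.2 t.2.1) - Real.log (mYZ P t.2.1 t.2.2.1))
        - (Real.log (q (t.1, t.2.1, t.2.2.1)) + Real.log (mY q t.2.1)
          - Real.log (mXY q t.1 t.2.1) - Real.log (mYZ q t.2.1 t.2.2.1))) := by
    rintro ⟨a', b, c, a⟩
    rcases (mul_nonneg (hR.1 a a') (hP0 (a, b, c))).lt_or_eq with ht | ht
    · have hR' : 0 < R a a' := by
        rcases (hR.1 a a').lt_or_eq with h | h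
        · exact h
        · exfalso; rw [← h, zero_mul] at ht; exact lt_irrefl _ ht
      have hPt : 0 < P (a, b, c) := by
        rcases (hP0 (a, b, c)).lt_or_eq with h | h
        · exact h
        · exfalso; rw [← h, mul_zero] at ht; exact lt_irrefl _ ht
      have h1 : 0 < mXY P a b := mXY_pos hP0 hPt
      have h2 : 0 < q (a', b, c) := lt_of_lt_of_le (mul_pos hR' hPt) (hq_ge a a' b c)
      have h3 : 0 < mXY q a' b := mXY_pos hq0 h2
      have eu : u (a', b, c, a) = R a a' * P (a, b, c) := rfl
      have ev : v (a', b, c, a)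
          = R a a' * mXY P a b * (q (a', b, c) / mXY q a' b) := rfl
      have hmy : mY q b = mY P b := mY_applyFst P R hR b
      have hmyz : mYZ q b c = mYZ P b c := mYZ_applyFst P R hR b c
      rw [eu, ev,
        Real.log_mul (ne_of_gt hR') (ne_of_gt hPt),
        Real.log_mul (by positivity) (by positivity),
        Real.log_mul (ne_of_gt hR') (ne_of_gt h1),
        Real.log_div (ne_of_gt h2) (ne_of_gt h3), hmy, hmyz]
      ring
    · have eu : u (a', b, c, a) = R a a' * P (a, b, c) := rfl
      rw [eu, ← ht]
      ring
  -- assemble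
  have main : ∑ t : A' × B × C × A, u t * (Real.log (u t) - Real.log (v t))
      = CMI P - CMI q := by
    rw [CMI_eq_s7 P, CMI_eq_s7 q]
    calc ∑ t : A' × B × C × A, u t * (Real.log (u t) - Real.log (v t))
        = ∑ a', ∑ b, ∑ c, ∑ a, R a a' * P (a, b, c) *
            ((Real.log (P (a, b, c)) + Real.log (mY P b)
              - Real.log (mXY P a b) - Real.log (mYZ P b c))
            - (Real.log (q (a', b, c)) + Real.log (mY q b)
              - Real.log (mXY q a' b) - Real.log (mYZ q b c))) := by
          rw [Fintype.sum_prod_type]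
          refine Finset.sum_congr rfl fun a' _ => ?_
          rw [Fintype.sum_prod_type]
          refine Finset.sum_congr rfl fun b _ => ?_
          rw [Fintype.sum_prod_type]
          refine Finset.sum_congr rfl fun c _ => ?_
          exact Finset.sum_congr rfl fun a _ => hterm (a', b, c, a)
      _ = (∑ a', ∑ b, ∑ c, ∑ a, R a a' * P (a, b, c) *
            (Real.log (P (a, b, c)) + Real.log (mY P b)
              - Real.log (mXY P a b) - Real.log (mYZ P b c)))
          - (∑ a', ∑ b, ∑ c, ∑ a, R a a' * P (a, b, c) *
            (Real.log (q (a', b, c)) + Real.log (mY q b)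
              - Real.log (mXY q a' b) - Real.log (mYZ q b c))) := by
          simp only [mul_sub, Finset.sum_sub_distrib]
      _ = (∑ a, ∑ b, ∑ c, P (a, b, c) *
            (Real.log (P (a, b, c)) + Real.log (mY P b)
              - Real.log (mXY P a b) - Real.log (mYZ P b c)))
          - (∑ a', ∑ b, ∑ c, q (a', b, c) *
            (Real.log (q (a', b, c)) + Real.log (mY q b)
              - Real.log (mXY q a' b) - Real.log (mYZ q b c))) := by
          congr 1
          · rw [sum_comm4 (fun a' b c a => R a a' * P (a, b, c) *
              (Real.log (P (a, b, c)) + Real.log (mY P b)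
                - Real.log (mXY P a b) - Real.log (mYZ P b c)))]
            refine Finset.sum_congr rfl fun a _ => ?_
            refine Finset.sum_congr rfl fun b _ => ?_
            refine Finset.sum_congr rfl fun c _ => ?_
            calc ∑ a', R a a' * P (a, b, c) *
                  (Real.log (P (a, b, c)) + Real.log (mY P b)
                    - Real.log (mXY P a b) - Real.log (mYZ P b c))
                = (∑ a', R a a') * (P (a, b, c) *
                  (Real.log (P (a, b, c)) + Real.log (mY P b)
                    - Real.log (mXY P a b) - Real.log (mYZ P b c))) := by
                  rw [Finset.sum_mul]
                  exact Finset.sum_congr rfl fun a' _ => by ring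
              _ = P (a, b, c) *
                  (Real.log (P (a, b, c)) + Real.log (mY P b)
                    - Real.log (mXY P a b) - Real.log (mYZ P b c)) := by
                  rw [hR.2 a, one_mul]
          · refine Finset.sum_congr rfl fun a' _ => ?_
            refine Finset.sum_congr rfl fun b _ => ?_
            refine Finset.sum_congr rfl fun c _ => ?_
            rw [← Finset.sum_mul]
            rfl
  have key := sum_gibbs (univ : Finset (A' × B × C × A)) u v
    (fun t _ => mul_nonneg (hR.1 _ _) (hP0 _))
    (fun t _ => mul_nonneg (mul_nonneg (hR.1 _ _) (mXY_nonneg hP0 _ _))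
      (div_nonneg (hq0 _) (mXY_nonneg hq0 _ _)))
    (fun t _ => hpos t)
    (hvsum.trans husum.symm)
  rw [main] at key
  linarith

end DPI

/-- data processing inequality for conditional mutual
information under a channel acting on the first argument:
`0 ≤ I(A':C|B)_{R(P)} ≤ I(A:C|B)_P`. -/
theorem stmt_7 {A A' B C : Type*} [Fintype A] [Fintype A'] [Fintype B] [Fintype C]
    (P : A × B × C → ℝ) (hP : IsDist P)
    (R : A → A' → ℝ) (hR : IsChannel R) :
    0 ≤ CMI (applyFst R P) ∧ CMI (applyFst R P) ≤ CMI P :=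
  ⟨CMI_nonneg_s7 (applyFst_isDist P R hP hR), CMI_DPI P R hP hR⟩
end

section
/- Let P be a probability distribution on the finite product type A × B × C satisfying I(A : C | B)_P = 0, let R be a channel from A to a finite type A', and let R(P) denote the distribution on A' × B × C obtained by applying R to the A-component of P. Then I(A' : C)_{R(P)} ≤ I(A' : B)_{R(P)}: the short-range mutual information upper-bounds the long-range mutual information for every renormalization map. -/
open Finset

section Aux
open Finset

private lemma margB' {A B C : Type*} [Fintype A] [Fintype B] [Fintype C] (f : A → B → C → ℝ) (L : B → ℝ) :
    ∑ b, (∑ a, ∑ c, f a b c) * L b = ∑ a, ∑ b, ∑ c, f a b c * L b := by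
  rw [Finset.sum_comm]
  refine Finset.sum_congr rfl fun b _ => ?_
  rw [Finset.sum_mul]
  exact Finset.sum_congr rfl fun a _ => Finset.sum_mul ..

private lemma margBC' {A B C : Type*} [Fintype A] [Fintype B] [Fintype C] (f : A → B → C → ℝ) (L : B → C → ℝ) :
    ∑ b, ∑ c, (∑ a, f a b c) * L b c = ∑ a, ∑ b, ∑ c, f a b c * L b c := by
  have h1 : ∀ b, ∑ c, (∑ a, f a b c) * L b c = ∑ a, ∑ c, f a b c * L b c := fun b => by
    rw [Finset.sum_comm]; exact Finset.sum_congr rfl fun c _ => Finset.sum_mul ..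
  simp_rw [h1]
  exact Finset.sum_comm

private lemma margAC' {A B C : Type*} [Fintype A] [Fintype B] [Fintype C] (f : A → B → C → ℝ) (L : A → C → ℝ) :
    ∑ a, ∑ c, (∑ b, f a b c) * L a c = ∑ a, ∑ b, ∑ c, f a b c * L a c := by
  refine Finset.sum_congr rfl fun a _ => ?_
  rw [Finset.sum_comm]
  refine Finset.sum_congr rfl fun c _ => Finset.sum_mul ..

private lemma margC' {A B C : Type*} [Fintype A] [Fintype B] [Fintype C] (f : A → B → C → ℝ) (L : C → ℝ) :
    ∑ c, (∑ a, ∑ b, f a b c) * L c = ∑ a, ∑ b, ∑ c, f a b c * L c := by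
  have h1 : ∀ c, (∑ a, ∑ b, f a b c) * L c = ∑ a, ∑ b, f a b c * L c := fun c => by
    rw [Finset.sum_mul]; exact Finset.sum_congr rfl fun a _ => Finset.sum_mul ..
  simp_rw [h1]
  rw [Finset.sum_comm]
  exact Finset.sum_congr rfl fun a _ => Finset.sum_comm

private lemma margAB' {A B C : Type*} [Fintype A] [Fintype B] [Fintype C] (f : A → B → C → ℝ) (L : A → B → ℝ) :
    ∑ a, ∑ b, (∑ c, f a b c) * L a b = ∑ a, ∑ b, ∑ c, f a b c * L a b :=
  Finset.sum_congr rfl fun a _ => Finset.sum_congr rfl fun b _ => Finset.sum_mul ..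

private lemma cmi_formula {A B C : Type*} [Fintype A] [Fintype B] [Fintype C] (P : A × B × C → ℝ) :
    CMI P = ∑ a, ∑ b, ∑ c, P (a,b,c) *
      (Real.log (P (a,b,c)) + Real.log (∑ x, ∑ z, P (x,b,z))
        - Real.log (∑ z, P (a,b,z)) - Real.log (∑ x, P (x,b,c))) := by
  simp only [CMI, MI, H, Fintype.sum_prod_type]
  rw [margBC' (fun a b c => P (a,b,c)) (fun b c => Real.log (∑ x, P (x,b,c))),
      margB' (fun a b c => P (a,b,c)) (fun b => Real.log (∑ x, ∑ z, P (x,b,z))),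
      margAB' (fun a b c => P (a,b,c)) (fun a b => Real.log (∑ z, P (a,b,z)))]
  simp only [mul_add, mul_sub, Finset.sum_add_distrib, Finset.sum_sub_distrib]
  ring

private lemma mi_diff {A' B C : Type*} [Fintype A'] [Fintype B] [Fintype C] (Q : A' → B → C → ℝ) :
    MI (fun q : A' × B => ∑ c, Q q.1 q.2 c) - MI (fun q : A' × C => ∑ b, Q q.1 b q.2)
      = ∑ a', ∑ b, ∑ c, Q a' b c *
          (Real.log (∑ z, Q a' b z) + Real.log (∑ x, ∑ y, Q x y c)
            - Real.log (∑ x, ∑ z, Q x b z) - Real.log (∑ y, Q a' y c)) := by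
  simp only [MI, H, Fintype.sum_prod_type]
  have hswap : ∀ a' : A', ∑ c, ∑ b, Q a' b c = ∑ b, ∑ c, Q a' b c := fun _ => Finset.sum_comm
  simp_rw [hswap]
  rw [margB' (fun x b z => Q x b z) (fun b => Real.log (∑ x, ∑ z, Q x b z)),
      margC' (fun x y c => Q x y c) (fun c => Real.log (∑ x, ∑ y, Q x y c)),
      margAB' (fun a b c => Q a b c) (fun a b => Real.log (∑ z, Q a b z)),
      margAC' (fun a b c => Q a b c) (fun a c => Real.log (∑ y, Q a y c))]
  simp only [mul_add, mul_sub, Finset.sum_add_distrib, Finset.sum_sub_distrib]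
  ring

private lemma gibbs_term {I : Type*} (p q : I → ℝ) (i : I) (hp0 : 0 ≤ p i) (hq0 : 0 ≤ q i)
    (hpq : 0 < p i → 0 < q i) :
    p i * (Real.log (q i) - Real.log (p i)) ≤ q i - p i := by
  rcases eq_or_lt_of_le hp0 with h | h
  · simp [← h]; exact hq0
  · have hq := hpq h
    rw [show Real.log (q i) - Real.log (p i) = Real.log (q i / p i) from
      (Real.log_div hq.ne' h.ne').symm]
    have hle := Real.log_le_sub_one_of_pos (div_pos hq h)
    calc p i * Real.log (q i / p i) ≤ p i * (q i / p i - 1) := by nlinarith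
      _ = q i - p i := by field_simp

private lemma gibbs_s10 {I : Type*} [Fintype I] (p q : I → ℝ)
    (hp0 : ∀ i, 0 ≤ p i) (hp1 : ∑ i, p i = 1)
    (hq0 : ∀ i, 0 ≤ q i) (hq1 : ∑ i, q i ≤ 1)
    (hpq : ∀ i, 0 < p i → 0 < q i) :
    ∑ i, p i * (Real.log (q i) - Real.log (p i)) ≤ 0 := by
  calc ∑ i, p i * (Real.log (q i) - Real.log (p i)) ≤ ∑ i, (q i - p i) :=
        Finset.sum_le_sum fun i _ => gibbs_term p q i (hp0 i) (hq0 i) (hpq i)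
    _ ≤ 0 := by rw [Finset.sum_sub_distrib, hp1]; linarith

private lemma gibbs_eq {I : Type*} [Fintype I] (p q : I → ℝ)
    (hp0 : ∀ i, 0 ≤ p i) (hp1 : ∑ i, p i = 1)
    (hq0 : ∀ i, 0 ≤ q i) (hq1 : ∑ i, q i = 1)
    (hpq : ∀ i, 0 < p i → 0 < q i)
    (heq : ∑ i, p i * (Real.log (q i) - Real.log (p i)) = 0) :
    ∀ i, p i = q i := by
  have hF : ∀ i ∈ Finset.univ, 0 ≤ (q i - p i) - p i * (Real.log (q i) - Real.log (p i)) :=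
    fun i _ => by linarith [gibbs_term p q i (hp0 i) (hq0 i) (hpq i)]
  have hFsum : ∑ i, ((q i - p i) - p i * (Real.log (q i) - Real.log (p i))) = 0 := by
    rw [Finset.sum_sub_distrib, heq, Finset.sum_sub_distrib, hp1, hq1]; ring
  have hzero := (Finset.sum_eq_zero_iff_of_nonneg hF).mp hFsum
  intro i
  have hi : (q i - p i) - p i * (Real.log (q i) - Real.log (p i)) = 0 :=
    hzero i (Finset.mem_univ i)
  rcases eq_or_lt_of_le (hp0 i) with h | h
  · simp [← h] at hi ⊢; linarith
  · have hq := hpq i h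
    by_contra hne
    have hratio : q i / p i ≠ 1 := by
      intro h1; exact hne (by field_simp at h1; linarith)
    have hlt := Real.log_lt_sub_one_of_pos (div_pos hq h) hratio
    rw [show Real.log (q i) - Real.log (p i) = Real.log (q i / p i) from
      (Real.log_div hq.ne' h.ne').symm] at hi
    have h3 : p i * Real.log (q i / p i) < p i * (q i / p i - 1) :=
      mul_lt_mul_of_pos_left hlt h
    have h2 : p i * (q i / p i - 1) = q i - p i := by field_simp
    nlinarith

private lemma markov_of_cmi {A B C : Type*} [Fintype A] [Fintype B] [Fintype C]
    (P : A × B × C → ℝ) (hP : IsDist P) (hM : CMI P = 0) :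
    ∀ a b c, P (a,b,c) * (∑ x, ∑ z, P (x,b,z)) = (∑ z, P (a,b,z)) * (∑ x, P (x,b,c)) := by
  obtain ⟨hP0, hP1⟩ := hP
  have hAB0 : ∀ a b, 0 ≤ ∑ z, P (a,b,z) := fun a b => Finset.sum_nonneg fun z _ => hP0 _
  have hBC0 : ∀ b c, 0 ≤ ∑ x, P (x,b,c) := fun b c => Finset.sum_nonneg fun x _ => hP0 _
  have hB0 : ∀ b, 0 ≤ ∑ x, ∑ z, P (x,b,z) := fun b => Finset.sum_nonneg fun x _ => hAB0 _ _
  have hleAB : ∀ a b c, P (a,b,c) ≤ ∑ z, P (a,b,z) := fun a b c =>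
    Finset.single_le_sum (fun z _ => hP0 (a,b,z)) (Finset.mem_univ c)
  have hleBC : ∀ a b c, P (a,b,c) ≤ ∑ x, P (x,b,c) := fun a b c =>
    Finset.single_le_sum (fun x _ => hP0 (x,b,c)) (Finset.mem_univ a)
  have hleB : ∀ a b c, P (a,b,c) ≤ ∑ x, ∑ z, P (x,b,z) := fun a b c =>
    le_trans (hleAB a b c) (Finset.single_le_sum (fun x _ => hAB0 x b) (Finset.mem_univ a))
  have hABle : ∀ a b, (∑ z, P (a,b,z)) ≤ ∑ x, ∑ z, P (x,b,z) := fun a b =>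
    Finset.single_le_sum (fun x _ => hAB0 x b) (Finset.mem_univ a)
  set q : A × B × C → ℝ := fun t =>
    if (∑ x, ∑ z, P (x, t.2.1, z)) = 0 then 0
    else (∑ z, P (t.1, t.2.1, z)) * (∑ x, P (x, t.2.1, t.2.2)) / (∑ x, ∑ z, P (x, t.2.1, z))
    with hqdef
  have hq0 : ∀ t, 0 ≤ q t := by
    rintro ⟨a, b, c⟩
    simp only [hqdef]
    split
    · exact le_rfl
    · exact div_nonneg (mul_nonneg (hAB0 a b) (hBC0 b c)) (hB0 b)
  have hq1 : ∑ t, q t = 1 := by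
    simp only [Fintype.sum_prod_type]
    rw [Finset.sum_comm]
    have hfix : ∀ b, ∑ a, ∑ c, q (a, b, c) = ∑ x, ∑ z, P (x,b,z) := by
      intro b
      by_cases hb : (∑ x, ∑ z, P (x,b,z)) = 0
      · simp [hqdef, hb]
      · simp only [hqdef, if_neg hb]
        simp_rw [div_eq_mul_inv, ← Finset.sum_mul, ← Finset.mul_sum]
        rw [← Finset.sum_mul]
        have h1 : (∑ c, ∑ x, P (x,b,c)) = ∑ x, ∑ z, P (x,b,z) := Finset.sum_comm
        rw [h1]
        field_simp
    simp_rw [hfix]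
    simp only [Fintype.sum_prod_type] at hP1
    rw [Finset.sum_comm] at hP1
    exact hP1
  have hpq : ∀ t, 0 < P t → 0 < q t := by
    rintro ⟨a, b, c⟩ h
    have hB := lt_of_lt_of_le h (hleB a b c)
    have hAB := lt_of_lt_of_le h (hleAB a b c)
    have hBC := lt_of_lt_of_le h (hleBC a b c)
    simp only [hqdef, if_neg hB.ne']
    exact div_pos (mul_pos hAB hBC) hB
  have hterm : ∀ a b c, P (a,b,c) * (Real.log (q (a,b,c)) - Real.log (P (a,b,c)))
      = -(P (a,b,c) * (Real.log (P (a,b,c)) + Real.log (∑ x, ∑ z, P (x,b,z))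
          - Real.log (∑ z, P (a,b,z)) - Real.log (∑ x, P (x,b,c)))) := by
    intro a b c
    rcases eq_or_lt_of_le (hP0 (a,b,c)) with h | h
    · rw [← h]; ring
    · have hB := lt_of_lt_of_le h (hleB a b c)
      have hAB := lt_of_lt_of_le h (hleAB a b c)
      have hBC := lt_of_lt_of_le h (hleBC a b c)
      simp only [hqdef, if_neg hB.ne']
      rw [Real.log_div (mul_ne_zero hAB.ne' hBC.ne') hB.ne',
        Real.log_mul hAB.ne' hBC.ne']
      ring
  have heq : ∑ t, P t * (Real.log (q t) - Real.log (P t)) = 0 := by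
    simp only [Fintype.sum_prod_type]
    simp_rw [hterm]
    simp only [Finset.sum_neg_distrib]
    rw [← cmi_formula P, hM, neg_zero]
  have hPQ := gibbs_eq P q hP0 hP1 hq0 hq1 hpq heq
  intro a b c
  by_cases hb : (∑ x, ∑ z, P (x,b,z)) = 0
  · have h1 : ∀ x ∈ Finset.univ, (∑ z, P (x,b,z)) = 0 :=
      (Finset.sum_eq_zero_iff_of_nonneg (fun x _ => hAB0 x b)).mp hb
    rw [hb, h1 a (Finset.mem_univ a)]
    ring
  · have h := hPQ (a,(b,c))
    simp only [hqdef, if_neg hb] at h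
    rw [h]
    field_simp

private lemma markov_dpi {A' B C : Type*} [Fintype A'] [Fintype B] [Fintype C]
    (Q : A' → B → C → ℝ) (hQ0 : ∀ a' b c, 0 ≤ Q a' b c)
    (hQ1 : ∑ a', ∑ b, ∑ c, Q a' b c = 1)
    (hfac : ∀ a' b c, Q a' b c * (∑ x, ∑ z, Q x b z) = (∑ z, Q a' b z) * (∑ x, Q x b c)) :
    MI (fun q : A' × C => ∑ b, Q q.1 b q.2) ≤ MI (fun q : A' × B => ∑ c, Q q.1 q.2 c) := by
  have hAB0 : ∀ a b, 0 ≤ ∑ z, Q a b z := fun a b => Finset.sum_nonneg fun z _ => hQ0 _ _ _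
  have hBC0 : ∀ b c, 0 ≤ ∑ x, Q x b c := fun b c => Finset.sum_nonneg fun x _ => hQ0 _ _ _
  have hAC0 : ∀ a c, 0 ≤ ∑ y, Q a y c := fun a c => Finset.sum_nonneg fun y _ => hQ0 _ _ _
  have hC0 : ∀ c, 0 ≤ ∑ x, ∑ y, Q x y c := fun c => Finset.sum_nonneg fun x _ => hAC0 _ _
  have hleAB : ∀ a b c, Q a b c ≤ ∑ z, Q a b z := fun a b c =>
    Finset.single_le_sum (fun z _ => hQ0 a b z) (Finset.mem_univ c)
  have hleBC : ∀ a b c, Q a b c ≤ ∑ x, Q x b c := fun a b c =>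
    Finset.single_le_sum (fun x _ => hQ0 x b c) (Finset.mem_univ a)
  have hleAC : ∀ a b c, Q a b c ≤ ∑ y, Q a y c := fun a b c =>
    Finset.single_le_sum (fun y _ => hQ0 a y c) (Finset.mem_univ b)
  have hleB : ∀ a b c, Q a b c ≤ ∑ x, ∑ z, Q x b z := fun a b c =>
    le_trans (hleAB a b c) (Finset.single_le_sum (fun x _ => hAB0 x b) (Finset.mem_univ a))
  have hleC : ∀ a b c, Q a b c ≤ ∑ x, ∑ y, Q x y c := fun a b c =>
    le_trans (hleAC a b c) (Finset.single_le_sum (fun x _ => hAC0 x c) (Finset.mem_univ a))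
  set p : A' × B × C → ℝ := fun t => Q t.1 t.2.1 t.2.2 with hpdef
  set qq : A' × B × C → ℝ := fun t =>
    if (∑ x, ∑ y, Q x y t.2.2) = 0 then 0
    else (∑ y, Q t.1 y t.2.2) * (∑ x, Q x t.2.1 t.2.2) / (∑ x, ∑ y, Q x y t.2.2)
    with hqdef
  have hp0 : ∀ t, 0 ≤ p t := fun t => hQ0 _ _ _
  have hp1 : ∑ t, p t = 1 := by
    simp only [hpdef, Fintype.sum_prod_type]; exact hQ1
  have hq0 : ∀ t, 0 ≤ qq t := by
    rintro ⟨a, b, c⟩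
    simp only [hqdef]
    split
    · exact le_rfl
    · exact div_nonneg (mul_nonneg (hAC0 a c) (hBC0 b c)) (hC0 c)
  have hQ1' : ∑ c, ∑ x, ∑ y, Q x y c = 1 := by
    rw [Finset.sum_comm]
    rw [show ∑ x : A', ∑ c : C, ∑ y : B, Q x y c = ∑ x : A', ∑ y : B, ∑ c : C, Q x y c from
      Finset.sum_congr rfl fun x _ => Finset.sum_comm]
    exact hQ1
  have hq1 : ∑ t, qq t ≤ 1 := by
    simp only [Fintype.sum_prod_type]
    rw [show ∑ a : A', ∑ b : B, ∑ c : C, qq (a, b, c)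
        = ∑ c : C, ∑ a : A', ∑ b : B, qq (a, b, c) from
      (Finset.sum_congr rfl fun a _ => Finset.sum_comm).trans Finset.sum_comm]
    rw [← hQ1']
    apply Finset.sum_le_sum
    intro c _
    by_cases hc : (∑ x, ∑ y, Q x y c) = 0
    · simpa [hqdef, hc] using hC0 c
    · simp only [hqdef, if_neg hc]
      simp_rw [div_eq_mul_inv, ← Finset.sum_mul, ← Finset.mul_sum]
      rw [← Finset.sum_mul]
      have h1 : (∑ b, ∑ x, Q x b c) = ∑ x, ∑ y, Q x y c := Finset.sum_comm
      rw [h1]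
      have h2 : (∑ a : A', ∑ y, Q a y c) = ∑ x, ∑ y, Q x y c := rfl
      rw [h2]
      rw [mul_inv_cancel_right₀ hc]
  have hpq : ∀ t, 0 < p t → 0 < qq t := by
    rintro ⟨a, b, c⟩ h
    have hC := lt_of_lt_of_le h (hleC a b c)
    have hAC := lt_of_lt_of_le h (hleAC a b c)
    have hBC := lt_of_lt_of_le h (hleBC a b c)
    simp only [hqdef, if_neg hC.ne']
    exact div_pos (mul_pos hAC hBC) hC
  have hg := gibbs_s10 p qq hp0 hp1 hq0 hq1 hpq
  have hterm : ∀ a b c, p (a,b,c) * (Real.log (qq (a,b,c)) - Real.log (p (a,b,c)))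
      = -(Q a b c * (Real.log (∑ z, Q a b z) + Real.log (∑ x, ∑ y, Q x y c)
          - Real.log (∑ x, ∑ z, Q x b z) - Real.log (∑ y, Q a y c))) := by
    intro a b c
    rcases eq_or_lt_of_le (hQ0 a b c) with h | h
    · have hp' : p (a,b,c) = 0 := h.symm
      have hq' : Q a b c = 0 := h.symm
      rw [hp', hq']; ring
    · have hC := lt_of_lt_of_le h (hleC a b c)
      have hAC := lt_of_lt_of_le h (hleAC a b c)
      have hBC := lt_of_lt_of_le h (hleBC a b c)
      have hB := lt_of_lt_of_le h (hleB a b c)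
      have hAB := lt_of_lt_of_le h (hleAB a b c)
      have hlog := congrArg Real.log (hfac a b c)
      rw [Real.log_mul h.ne' hB.ne', Real.log_mul hAB.ne' hBC.ne'] at hlog
      simp only [hqdef, hpdef, if_neg hC.ne']
      rw [Real.log_div (mul_ne_zero hAC.ne' hBC.ne') hC.ne',
        Real.log_mul hAC.ne' hBC.ne']
      linear_combination (-(Q a b c)) * hlog
  have hdiff := mi_diff Q
  have hsum : ∑ a', ∑ b, ∑ c, Q a' b c *
      (Real.log (∑ z, Q a' b z) + Real.log (∑ x, ∑ y, Q x y c)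
        - Real.log (∑ x, ∑ z, Q x b z) - Real.log (∑ y, Q a' y c))
      = -∑ t, p t * (Real.log (qq t) - Real.log (p t)) := by
    simp only [Fintype.sum_prod_type]
    simp_rw [hterm]
    simp only [Finset.sum_neg_distrib, neg_neg]
  linarith [hg, hdiff, hsum]
end Aux

/-- if `I(A:C|B)_P = 0` then for any channel `R : A → A'`,
`I(A':C)_{R(P)} ≤ I(A':B)_{R(P)}`. -/
theorem stmt_10 {A A' B C : Type*} [Fintype A] [Fintype A'] [Fintype B] [Fintype C]
    (P : A × B × C → ℝ) (hP : IsDist P)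
    (hMarkov : CMI P = 0)
    (R : A → A' → ℝ) (hR : IsChannel R) :
    MI (fun q : A' × C => ∑ b, applyFst R P (q.1, b, q.2)) ≤
      MI (fun q : A' × B => ∑ c, applyFst R P (q.1, q.2, c)) := by
  obtain ⟨hR0, hR1⟩ := hR
  have hP0 := hP.1
  have hP1 := hP.2
  have hMk := markov_of_cmi P hP hMarkov
  set Q : A' → B → C → ℝ := fun a' b c => ∑ a, R a a' * P (a, b, c) with hQdef
  have hQ0 : ∀ a' b c, 0 ≤ Q a' b c := fun a' b c =>
    Finset.sum_nonneg fun a _ => mul_nonneg (hR0 a a') (hP0 (a, b, c))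
  have hQAB : ∀ a' b, ∑ z, Q a' b z = ∑ a, R a a' * ∑ z, P (a, b, z) := by
    intro a' b
    rw [Finset.sum_comm]
    exact Finset.sum_congr rfl fun a _ => (Finset.mul_sum ..).symm
  have hQBC : ∀ b c, ∑ x, Q x b c = ∑ x, P (x, b, c) := by
    intro b c
    rw [Finset.sum_comm]
    refine Finset.sum_congr rfl fun a _ => ?_
    rw [← Finset.sum_mul, hR1 a, one_mul]
  have hQB : ∀ b, ∑ x, ∑ z, Q x b z = ∑ x, ∑ z, P (x, b, z) := by
    intro b
    simp_rw [hQAB]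
    rw [Finset.sum_comm]
    refine Finset.sum_congr rfl fun a _ => ?_
    rw [← Finset.sum_mul, hR1 a, one_mul]
  have hfac : ∀ a' b c, Q a' b c * (∑ x, ∑ z, Q x b z)
      = (∑ z, Q a' b z) * (∑ x, Q x b c) := by
    intro a' b c
    rw [hQB, hQBC, hQAB, hQdef]
    rw [Finset.sum_mul, Finset.sum_mul]
    refine Finset.sum_congr rfl fun a _ => ?_
    rw [mul_assoc, mul_assoc, hMk a b c]
  have hQ1 : ∑ a', ∑ b, ∑ c, Q a' b c = 1 := by
    have h1 : ∀ a' b, ∑ c, Q a' b c = ∑ a, R a a' * ∑ z, P (a, b, z) := hQAB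
    simp_rw [h1]
    rw [show ∑ a' : A', ∑ b : B, ∑ a : A, R a a' * ∑ z : C, P (a, b, z)
        = ∑ a : A, ∑ a' : A', ∑ b : B, R a a' * ∑ z : C, P (a, b, z) from
      (Finset.sum_congr rfl fun a' _ => Finset.sum_comm).trans Finset.sum_comm]
    have h2 : ∀ a : A, ∑ a' : A', ∑ b : B, R a a' * ∑ z : C, P (a, b, z)
        = ∑ b : B, ∑ z : C, P (a, b, z) := by
      intro a
      rw [show ∑ a' : A', ∑ b : B, R a a' * ∑ z : C, P (a, b, z)
          = ∑ b : B, ∑ a' : A', R a a' * ∑ z : C, P (a, b, z) from Finset.sum_comm]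
      refine Finset.sum_congr rfl fun b _ => ?_
      rw [← Finset.sum_mul, hR1 a, one_mul]
    simp_rw [h2]
    simpa only [Fintype.sum_prod_type] using hP1
  exact markov_dpi Q hQ0 hQ1 hfac
end
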